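/- arXiv:1810.00122 — 9 statements merged into one kernel-verified Lean document; each statement's English description precedes it below -/
import Mathlib

section
/- Scaling property under orthogonal conjugation and rescaling: Let Q be a d×d real orthogonal matrix and μ > 0, γ > 0. Let (a_k, w_k) be the BNGD iterates for the configuration (H, u, a₀, w₀, ε_a, ε), and let (a'_k, w'_k) be the BNGD iterates for the configuration (H', u', a'₀, w'₀, ε_a, ε) where H' := μ Q H Qᵀ, u' := (γ/√μ) Q u, a'₀ := γ a₀, w'₀ := γ Q w₀. Then for every k ≥ 0 one has a'_k = γ a_k and w'_k = γ Q w_k. -/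
open Matrix

/-! The map `(a, w) ↦ (γ a, γ Q w)` conjugates the two BNGD iterations. Orthogonality of `Q` gives
`w'ᵀg' = γ²√μ wᵀg`, `σ'(w') = γ√μ σ(w)`, `g' = γ√μ Q g` and `H'w' = γμ Q H w` for `w' = γ Q w`, and
with these every term of the primed update is `γ` (resp. `γ Q`) times the unprimed one; the theorem
follows by induction on `k`. -/

section Orthogonal

variable {R n : Type*} [CommSemiring R] [Fintype n] [DecidableEq n] {Q : Matrix n n R}

theorem dotProduct_mulVec_mulVec_of_transpose_mul_eq_one (hQ : Qᵀ * Q = 1) (x y : n → R) :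
    Q *ᵥ x ⬝ᵥ Q *ᵥ y = x ⬝ᵥ y := by
  rw [← dotProduct_transpose_mulVec, mulVec_mulVec, hQ, one_mulVec, dotProduct_comm]

theorem smul_conj_mulVec_smul_mulVec_of_transpose_mul_eq_one (hQ : Qᵀ * Q = 1)
    (H : Matrix n n R) (μ c : R) (v : n → R) :
    (μ • (Q * H * Qᵀ)) *ᵥ (c • Q *ᵥ v) = (c * μ) • Q *ᵥ (H *ᵥ v) := by
  rw [smul_mulVec, mulVec_smul, mulVec_mulVec, Matrix.mul_assoc, Matrix.mul_assoc, hQ,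
    Matrix.mul_one, ← mulVec_mulVec, smul_smul, mul_comm]

end Orthogonal

theorem sqrt_dotProduct_smul_conj_mulVec_of_transpose_mul_eq_one {n : Type*} [Fintype n]
    [DecidableEq n] {Q : Matrix n n ℝ} (hQ : Qᵀ * Q = 1) (H : Matrix n n ℝ) {μ γ : ℝ} (hμ : 0 ≤ μ)
    (hγ : 0 ≤ γ) (v : n → ℝ) :
    √((γ • Q *ᵥ v) ⬝ᵥ (μ • (Q * H * Qᵀ)) *ᵥ (γ • Q *ᵥ v)) = γ * √μ * √(v ⬝ᵥ H *ᵥ v) := by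
  have hquad : (γ • Q *ᵥ v) ⬝ᵥ (μ • (Q * H * Qᵀ)) *ᵥ (γ • Q *ᵥ v) = γ * γ * μ * (v ⬝ᵥ H *ᵥ v) := by
    rw [smul_conj_mulVec_smul_mulVec_of_transpose_mul_eq_one hQ, smul_dotProduct, dotProduct_smul,
      dotProduct_mulVec_mulVec_of_transpose_mul_eq_one hQ, smul_eq_mul, smul_eq_mul]
    ring
  rw [hquad, Real.sqrt_mul (by positivity), Real.sqrt_mul (by positivity), Real.sqrt_mul_self hγ]

theorem bngd_gain_update_smul {γ c : ℝ} (hc : c ≠ 0) (εa a p σ : ℝ) :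
    γ * a + εa * (γ * c * p / (c * σ) - γ * a) = γ * (a + εa * (p / σ - a)) := by
  rw [mul_assoc γ, mul_div_assoc, mul_div_mul_left _ _ hc]
  ring

theorem bngd_weight_update_smul {E F : Type*} [AddCommGroup E] [Module ℝ E] [AddCommGroup F]
    [Module ℝ F] (T : E →ₗ[ℝ] F) {γ μ : ℝ} (hγ : γ ≠ 0) (hμ : 0 < μ) (ε a p σ : ℝ) (w g h : E) :
    γ • T w + (ε * (γ * a / (γ * √μ * σ))) •
        ((γ * √μ) • T g - (γ * (γ * √μ) * p / (γ * √μ * σ) ^ 2) • (γ * μ) • T h) =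
      γ • T (w + (ε * (a / σ)) • (g - (p / σ ^ 2) • h)) := by
  have hs : √μ ≠ 0 := (Real.sqrt_pos.mpr hμ).ne'
  rcases eq_or_ne σ 0 with rfl | hσ
  · simp
  have hg_coeff : ε * (γ * a / (γ * √μ * σ)) * (γ * √μ) = γ * (ε * (a / σ)) := by
    field_simp
  have hh_coeff : ε * (γ * a / (γ * √μ * σ)) * (γ * (γ * √μ) * p / (γ * √μ * σ) ^ 2 * (γ * μ)) =
      γ * (ε * (a / σ) * (p / σ ^ 2)) := by
    field_simp
    rw [Real.sq_sqrt hμ.le]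
    ring
  simp only [map_add, map_smul, map_sub, smul_add, smul_sub, smul_smul, hg_coeff, hh_coeff]

theorem bngd_scaling_orthogonal_general
    {d : ℕ}
    (H : Matrix (Fin d) (Fin d) ℝ)
    (u : Fin d → ℝ)
    (Q : Matrix (Fin d) (Fin d) ℝ) (hQ : Qᵀ * Q = 1)
    (μ γ : ℝ) (hμ : 0 < μ) (hγ : 0 < γ)
    (εa ε : ℝ)
    (g : Fin d → ℝ) (hg : g = H.mulVec u)
    (σ : (Fin d → ℝ) → ℝ) (hσ : ∀ v, σ v = Real.sqrt (v ⬝ᵥ H.mulVec v))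
    -- the unprimed BNGD iterates
    (a : ℕ → ℝ) (w : ℕ → Fin d → ℝ)
    (ha : ∀ k, a (k + 1) = a k + εa * ((w k ⬝ᵥ g) / σ (w k) - a k))
    (hw : ∀ k, w (k + 1) = w k +
      (ε * (a k / σ (w k))) • (g - ((w k ⬝ᵥ g) / (σ (w k)) ^ 2) • H.mulVec (w k)))
    -- the primed configuration
    (H' : Matrix (Fin d) (Fin d) ℝ) (hH' : H' = μ • (Q * H * Qᵀ))
    (u' : Fin d → ℝ) (hu' : u' = (γ / Real.sqrt μ) • Q.mulVec u)
    (g' : Fin d → ℝ) (hg' : g' = H'.mulVec u')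
    (σ' : (Fin d → ℝ) → ℝ) (hσ' : ∀ v, σ' v = Real.sqrt (v ⬝ᵥ H'.mulVec v))
    -- the primed BNGD iterates
    (a' : ℕ → ℝ) (w' : ℕ → Fin d → ℝ)
    (ha'0 : a' 0 = γ * a 0) (hw'0 : w' 0 = γ • Q.mulVec (w 0))
    (ha' : ∀ k, a' (k + 1) = a' k + εa * ((w' k ⬝ᵥ g') / σ' (w' k) - a' k))
    (hw' : ∀ k, w' (k + 1) = w' k +
      (ε * (a' k / σ' (w' k))) • (g' - ((w' k ⬝ᵥ g') / (σ' (w' k)) ^ 2) • H'.mulVec (w' k))) :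
    ∀ k, a' k = γ * a k ∧ w' k = γ • Q.mulVec (w k) := by
  have hH'Q (v : Fin d → ℝ) : H' *ᵥ (γ • Q *ᵥ v) = (γ * μ) • Q *ᵥ (H *ᵥ v) := by
    rw [hH', smul_conj_mulVec_smul_mulVec_of_transpose_mul_eq_one hQ]
  have hg'Q : g' = (γ * √μ) • Q *ᵥ g := by
    rw [hg', hH', hu', smul_conj_mulVec_smul_mulVec_of_transpose_mul_eq_one hQ, ← hg, mul_comm,
      ← mul_div_assoc, mul_comm, mul_div_assoc, Real.div_sqrt]
  have hσ'Q (v : Fin d → ℝ) : σ' (γ • Q *ᵥ v) = γ * √μ * σ v := by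
    rw [hσ', hσ, hH', sqrt_dotProduct_smul_conj_mulVec_of_transpose_mul_eq_one hQ H hμ.le hγ.le]
  have hp'Q (v : Fin d → ℝ) : (γ • Q *ᵥ v) ⬝ᵥ g' = γ * (γ * √μ) * (v ⬝ᵥ g) := by
    rw [hg'Q, smul_dotProduct, dotProduct_smul, dotProduct_mulVec_mulVec_of_transpose_mul_eq_one hQ,
      smul_eq_mul, smul_eq_mul]
    ring
  intro k
  induction k with
  | zero => exact ⟨ha'0, hw'0⟩
  | succ k ih =>
    obtain ⟨ha'k, hw'k⟩ := ih
    rw [ha', hw', ha, hw, ha'k, hw'k, hσ'Q, hp'Q, hH'Q, hg'Q]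
    have hc : γ * √μ ≠ 0 := (mul_pos hγ (Real.sqrt_pos.mpr hμ)).ne'
    exact ⟨bngd_gain_update_smul hc .., bngd_weight_update_smul Q.mulVecLin hγ.ne' hμ ..⟩

/-- Scaling property of BNGD under orthogonal conjugation and rescaling:
if `H' = μ • Q H Qᵀ`, `u' = (γ/√μ) • Q u`, `a'₀ = γ a₀`, `w'₀ = γ • Q w₀`,
then the BNGD iterates satisfy `a'_k = γ a_k` and `w'_k = γ • Q w_k` for all `k`. -/
theorem bngd_scaling_orthogonal
    {d : ℕ} (hd : 0 < d)
    (H : Matrix (Fin d) (Fin d) ℝ) (hH : H.PosDef)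
    (u : Fin d → ℝ) (hu : u ≠ 0)
    (Q : Matrix (Fin d) (Fin d) ℝ) (hQ : Qᵀ * Q = 1)
    (μ γ : ℝ) (hμ : 0 < μ) (hγ : 0 < γ)
    (εa ε : ℝ) (hεa : 0 < εa) (hε : 0 < ε)
    (g : Fin d → ℝ) (hg : g = H.mulVec u)
    (σ : (Fin d → ℝ) → ℝ) (hσ : ∀ v, σ v = Real.sqrt (v ⬝ᵥ H.mulVec v))
    -- the unprimed BNGD iterates
    (a : ℕ → ℝ) (w : ℕ → Fin d → ℝ) (hw0 : w 0 ≠ 0) (hwk : ∀ k, w k ≠ 0)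
    (ha : ∀ k, a (k + 1) = a k + εa * ((w k ⬝ᵥ g) / σ (w k) - a k))
    (hw : ∀ k, w (k + 1) = w k +
      (ε * (a k / σ (w k))) • (g - ((w k ⬝ᵥ g) / (σ (w k)) ^ 2) • H.mulVec (w k)))
    -- the primed configuration
    (H' : Matrix (Fin d) (Fin d) ℝ) (hH' : H' = μ • (Q * H * Qᵀ))
    (u' : Fin d → ℝ) (hu' : u' = (γ / Real.sqrt μ) • Q.mulVec u)
    (g' : Fin d → ℝ) (hg' : g' = H'.mulVec u')
    (σ' : (Fin d → ℝ) → ℝ) (hσ' : ∀ v, σ' v = Real.sqrt (v ⬝ᵥ H'.mulVec v))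
    -- the primed BNGD iterates
    (a' : ℕ → ℝ) (w' : ℕ → Fin d → ℝ)
    (ha'0 : a' 0 = γ * a 0) (hw'0 : w' 0 = γ • Q.mulVec (w 0))
    (ha' : ∀ k, a' (k + 1) = a' k + εa * ((w' k ⬝ᵥ g') / σ' (w' k) - a' k))
    (hw' : ∀ k, w' (k + 1) = w' k +
      (ε * (a' k / σ' (w' k))) • (g' - ((w' k ⬝ᵥ g') / (σ' (w' k)) ^ 2) • H'.mulVec (w' k))) :
    ∀ k, a' k = γ * a k ∧ w' k = γ • Q.mulVec (w k) :=
  bngd_scaling_orthogonal_general H u Q hQ μ γ hμ hγ εa ε g hg σ hσ a w ha hw H' hH' u' hu' g' hg'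
    σ' hσ' a' w' ha'0 hw'0 ha' hw'
end

section
/- Scaling property in the initial weight: Let r > 0. Let (a_k, w_k) be the BNGD iterates for the configuration (H, u, a₀, w₀, ε_a, ε), and let (a'_k, w'_k) be the BNGD iterates for the configuration (H, u, a₀, r·w₀, ε_a, r²·ε). Then for every k ≥ 0 one has a'_k = a_k and w'_k = r·w_k. -/
open Matrix

noncomputable section

/-!
Both BNGD updates are invariant under `w ↦ r • w`, `ε ↦ r² ε`: the normalizer `σ` is
positively homogeneous of degree one, so the coefficient `wᵀg / σ(w)` is scale invariant, while in
the weight increment the factor `r²` of the step size, the factor `r⁻¹` of `1 / σ(w)` and the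
scale-invariant projected gradient `g - (wᵀg / σ(w)²) H w` combine to `r`, so it scales like `w`.
Induction on `k` then carries `a'_k = a_k`, `w'_k = r • w_k` along the two trajectories.
-/

namespace BNGD

variable {n : Type*} [Fintype n]

def stepA (εa : ℝ) (g : n → ℝ) (σ : (n → ℝ) → ℝ) (a : ℝ) (w : n → ℝ) : ℝ :=
  a + εa * ((w ⬝ᵥ g) / σ w - a)

def stepW (H : Matrix n n ℝ) (ε : ℝ) (g : n → ℝ) (σ : (n → ℝ) → ℝ) (a : ℝ) (w : n → ℝ) :
    n → ℝ :=
  w + (ε * (a / σ w)) • (g - ((w ⬝ᵥ g) / σ w ^ 2) • H *ᵥ w)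

theorem sqrt_smul_dotProduct_mulVec_smul (H : Matrix n n ℝ) {r : ℝ} (hr : 0 ≤ r) (v : n → ℝ) :
    √((r • v) ⬝ᵥ H *ᵥ (r • v)) = r * √(v ⬝ᵥ H *ᵥ v) := by
  have hquad : (r • v) ⬝ᵥ H *ᵥ (r • v) = r ^ 2 * (v ⬝ᵥ H *ᵥ v) := by
    rw [mulVec_smul, smul_dotProduct, dotProduct_smul, smul_eq_mul, smul_eq_mul]
    ring
  rw [hquad, Real.sqrt_mul (pow_nonneg hr 2), Real.sqrt_sq hr]

variable {σ : (n → ℝ) → ℝ} {r : ℝ}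

theorem stepA_smul (hr : r ≠ 0) (hσ : ∀ v, σ (r • v) = r * σ v)
    (εa : ℝ) (g : n → ℝ) (a : ℝ) (w : n → ℝ) :
    stepA εa g σ a (r • w) = stepA εa g σ a w := by
  rw [stepA, stepA, hσ, smul_dotProduct, smul_eq_mul, mul_div_mul_left _ _ hr]

theorem stepW_smul (hr : r ≠ 0) (hσ : ∀ v, σ (r • v) = r * σ v)
    (H : Matrix n n ℝ) (ε : ℝ) (g : n → ℝ) (a : ℝ) (w : n → ℝ) :
    stepW H (r ^ 2 * ε) g σ a (r • w) = r • stepW H ε g σ a w := by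
  set s := σ w
  set x := w ⬝ᵥ g
  have hstep : r ^ 2 * ε * (a / (r * s)) = r * (ε * (a / s)) := by
    rw [mul_comm r s, ← div_div, mul_div_assoc', mul_div_assoc', pow_two]
    field_simp
  have hcoeff : r * x / (r * s) ^ 2 * r = x / s ^ 2 := by
    rw [mul_pow]
    field_simp
  rw [stepW, stepW, hσ, smul_dotProduct, smul_eq_mul, mulVec_smul, smul_smul, hcoeff, hstep,
    mul_smul, smul_add]

end BNGD

open BNGD in
theorem bngd_scaling_initial_weight_general
    {d : ℕ}
    (H : Matrix (Fin d) (Fin d) ℝ)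
    (r : ℝ) (hr : 0 < r)
    (εa ε : ℝ)
    (g : Fin d → ℝ)
    (σ : (Fin d → ℝ) → ℝ) (hσ : ∀ v, σ v = Real.sqrt (v ⬝ᵥ H.mulVec v))
    -- the BNGD iterates for step size ε
    (a : ℕ → ℝ) (w : ℕ → Fin d → ℝ)
    (ha : ∀ k, a (k + 1) = a k + εa * ((w k ⬝ᵥ g) / σ (w k) - a k))
    (hw : ∀ k, w (k + 1) = w k +
      (ε * (a k / σ (w k))) • (g - ((w k ⬝ᵥ g) / (σ (w k)) ^ 2) • H.mulVec (w k)))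
    -- the BNGD iterates for initial weight r • w₀ and step size r² ε
    (a' : ℕ → ℝ) (w' : ℕ → Fin d → ℝ)
    (ha'0 : a' 0 = a 0) (hw'0 : w' 0 = r • w 0)
    (ha' : ∀ k, a' (k + 1) = a' k + εa * ((w' k ⬝ᵥ g) / σ (w' k) - a' k))
    (hw' : ∀ k, w' (k + 1) = w' k +
      ((r ^ 2 * ε) * (a' k / σ (w' k))) •
        (g - ((w' k ⬝ᵥ g) / (σ (w' k)) ^ 2) • H.mulVec (w' k))) :
    ∀ k, a' k = a k ∧ w' k = r • w k := by
  have hσr : ∀ v, σ (r • v) = r * σ v := fun v => by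
    rw [hσ, hσ, sqrt_smul_dotProduct_mulVec_smul H hr.le]
  intro k
  induction k with
  | zero => exact ⟨ha'0, hw'0⟩
  | succ k ih =>
    obtain ⟨ha'k, hw'k⟩ := ih
    constructor
    · rw [ha' k, ha k, ha'k, hw'k]
      exact stepA_smul hr.ne' hσr εa g (a k) (w k)
    · rw [hw' k, hw k, ha'k, hw'k]
      exact stepW_smul hr.ne' hσr H ε g (a k) (w k)

/-- Scaling property of BNGD in the initial weight: the configuration
`(H, u, a₀, r·w₀, ε_a, r²·ε)` produces iterates `a'_k = a_k` and `w'_k = r • w_k`. -/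
theorem bngd_scaling_initial_weight
    {d : ℕ} (hd : 0 < d)
    (H : Matrix (Fin d) (Fin d) ℝ) (hH : H.PosDef)
    (u : Fin d → ℝ) (hu : u ≠ 0)
    (r : ℝ) (hr : 0 < r)
    (εa ε : ℝ) (hεa : 0 < εa) (hε : 0 < ε)
    (g : Fin d → ℝ) (hg : g = H.mulVec u)
    (σ : (Fin d → ℝ) → ℝ) (hσ : ∀ v, σ v = Real.sqrt (v ⬝ᵥ H.mulVec v))
    -- the BNGD iterates for step size ε
    (a : ℕ → ℝ) (w : ℕ → Fin d → ℝ) (hw0 : w 0 ≠ 0) (hwk : ∀ k, w k ≠ 0)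
    (ha : ∀ k, a (k + 1) = a k + εa * ((w k ⬝ᵥ g) / σ (w k) - a k))
    (hw : ∀ k, w (k + 1) = w k +
      (ε * (a k / σ (w k))) • (g - ((w k ⬝ᵥ g) / (σ (w k)) ^ 2) • H.mulVec (w k)))
    -- the BNGD iterates for initial weight r • w₀ and step size r² ε
    (a' : ℕ → ℝ) (w' : ℕ → Fin d → ℝ)
    (ha'0 : a' 0 = a 0) (hw'0 : w' 0 = r • w 0)
    (ha' : ∀ k, a' (k + 1) = a' k + εa * ((w' k ⬝ᵥ g) / σ (w' k) - a' k))
    (hw' : ∀ k, w' (k + 1) = w' k +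
      ((r ^ 2 * ε) * (a' k / σ (w' k))) •
        (g - ((w' k ⬝ᵥ g) / (σ (w' k)) ^ 2) • H.mulVec (w' k))) :
    ∀ k, a' k = a k ∧ w' k = r • w k :=
  bngd_scaling_initial_weight_general H r hr εa ε g σ hσ a w ha hw a' w' ha'0 hw'0 ha' hw'
end
end

section
/- Contraction bound for the BNGD residual: For every k with w_k ≠ 0 and w_{k+1} ≠ 0, the residuals e_k := u − (w_kᵀg/σ(w_k)²)w_k satisfy ‖e_{k+1}‖_H ≤ ‖u − (w_kᵀg/σ(w_k)²)w_{k+1}‖_H ≤ ρ(I − ε̂_k H)·‖e_k‖_H, where ε̂_k := ε(a_k/σ(w_k))(w_kᵀg/σ(w_k)²), ρ(I − t H) := max over all eigenvalues λ of H of |1 − t·λ|, and ‖x‖_H := √(xᵀHx). (The first inequality uses that t ↦ ‖u − t·w‖_H is minimized at t = wᵀHu/(wᵀHw), i.e., w ↦ (wᵀHu/wᵀHw)·w is the H-orthogonal projection of u onto the span of w.) -/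
/-!
In terms of the residual `e = u - c • w` with `c = wᵀg / σ(w)²`, the BNGD step makes
`u - c • w_{k+1}` equal to `(I - ε̂ H) e`, because `g - c • H w = H e`. Expanding in an orthonormal
eigenbasis of `H`, the `H`-norm of `(I - t H) e` is at most `max |1 - t λ|` times that of `e`.
The first inequality holds because `(wᵀHu / wᵀHw) • w` is the `H`-orthogonal projection of `u`
onto the line through `w`, and `e_{k+1}` is exactly `u` minus this projection for `w = w_{k+1}`.
-/

open Matrix

variable {n : Type*} [Fintype n]

lemma OrthonormalBasis.dotProduct_eq_sum {ι : Type*} [Fintype ι]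
    (b : OrthonormalBasis ι ℝ (EuclideanSpace ℝ n)) (x y : n → ℝ) :
    x ⬝ᵥ y = ∑ i, (x ⬝ᵥ ⇑(b i)) * (y ⬝ᵥ ⇑(b i)) := by
  have parseval := b.sum_inner_mul_inner (WithLp.toLp 2 x) (WithLp.toLp 2 y)
  simp only [EuclideanSpace.inner_eq_star_dotProduct, star_trivial] at parseval
  simp_rw [dotProduct_comm _ x] at parseval
  exact parseval.symm

lemma Matrix.IsHermitian.dotProduct_mulVec_comm {H : Matrix n n ℝ} (hH : H.IsHermitian)
    (x y : n → ℝ) : x ⬝ᵥ H *ᵥ y = y ⬝ᵥ H *ᵥ x := by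
  rw [dotProduct_mulVec, ← mulVec_transpose, dotProduct_comm,
    ← conjTranspose_eq_transpose_of_trivial, hH.eq]

namespace Matrix.IsHermitian
variable [DecidableEq n] {H : Matrix n n ℝ}

lemma mulVec_dotProduct_eigenvectorBasis (hH : H.IsHermitian) (x : n → ℝ) (i : n) :
    H *ᵥ x ⬝ᵥ ⇑(hH.eigenvectorBasis i) = hH.eigenvalues i * (x ⬝ᵥ ⇑(hH.eigenvectorBasis i)) := by
  rw [dotProduct_comm, hH.dotProduct_mulVec_comm, hH.mulVec_eigenvectorBasis, dotProduct_smul,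
    smul_eq_mul, dotProduct_comm]

lemma dotProduct_mulVec_self_eq_sum (hH : H.IsHermitian) (x : n → ℝ) :
    x ⬝ᵥ H *ᵥ x = ∑ i, hH.eigenvalues i * (x ⬝ᵥ ⇑(hH.eigenvectorBasis i)) ^ 2 := by
  rw [hH.eigenvectorBasis.dotProduct_eq_sum]
  congr! 1 with i
  rw [hH.mulVec_dotProduct_eigenvectorBasis]
  ring

end Matrix.IsHermitian

namespace Matrix.PosSemidef
variable [DecidableEq n] {H : Matrix n n ℝ}

lemma dotProduct_mulVec_sub_smul_mulVec_le (hH : H.PosSemidef) (t : ℝ) (x : n → ℝ) :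
    (x - t • H *ᵥ x) ⬝ᵥ H *ᵥ (x - t • H *ᵥ x) ≤
      (⨆ i, |1 - t * hH.1.eigenvalues i|) ^ 2 * (x ⬝ᵥ H *ᵥ x) := by
  have hρ : ∀ i, |1 - t * hH.1.eigenvalues i| ≤ ⨆ i, |1 - t * hH.1.eigenvalues i| :=
    le_ciSup (Set.finite_range _).bddAbove
  rw [hH.1.dotProduct_mulVec_self_eq_sum, hH.1.dotProduct_mulVec_self_eq_sum, Finset.mul_sum]
  refine Finset.sum_le_sum fun i _ => ?_
  have hcoord : (x - t • H *ᵥ x) ⬝ᵥ ⇑(hH.1.eigenvectorBasis i) =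
      (1 - t * hH.1.eigenvalues i) * (x ⬝ᵥ ⇑(hH.1.eigenvectorBasis i)) := by
    rw [sub_dotProduct, smul_dotProduct, hH.1.mulVec_dotProduct_eigenvectorBasis, smul_eq_mul]
    ring
  rw [hcoord, mul_pow, ← sq_abs (1 - _), mul_left_comm]
  gcongr
  · exact mul_nonneg (hH.eigenvalues_nonneg i) (sq_nonneg _)
  · exact hρ i

lemma sqrt_dotProduct_mulVec_sub_smul_mulVec_le (hH : H.PosSemidef) (t : ℝ) (x : n → ℝ) :
    √((x - t • H *ᵥ x) ⬝ᵥ H *ᵥ (x - t • H *ᵥ x)) ≤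
      (⨆ i, |1 - t * hH.1.eigenvalues i|) * √(x ⬝ᵥ H *ᵥ x) := by
  have hρ : 0 ≤ ⨆ i, |1 - t * hH.1.eigenvalues i| := Real.iSup_nonneg fun _ => abs_nonneg _
  calc √((x - t • H *ᵥ x) ⬝ᵥ H *ᵥ (x - t • H *ᵥ x))
      ≤ √((⨆ i, |1 - t * hH.1.eigenvalues i|) ^ 2 * (x ⬝ᵥ H *ᵥ x)) :=
        Real.sqrt_le_sqrt (hH.dotProduct_mulVec_sub_smul_mulVec_le t x)
    _ = (⨆ i, |1 - t * hH.1.eigenvalues i|) * √(x ⬝ᵥ H *ᵥ x) := by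
        rw [Real.sqrt_mul (sq_nonneg _), Real.sqrt_sq hρ]

end Matrix.PosSemidef

lemma Matrix.IsHermitian.dotProduct_mulVec_sub_proj_le {H : Matrix n n ℝ} (hH : H.IsHermitian)
    {w : n → ℝ} (hw : 0 < w ⬝ᵥ H *ᵥ w) (u : n → ℝ) (c : ℝ) :
    (u - ((w ⬝ᵥ H *ᵥ u) / (w ⬝ᵥ H *ᵥ w)) • w) ⬝ᵥ
        H *ᵥ (u - ((w ⬝ᵥ H *ᵥ u) / (w ⬝ᵥ H *ᵥ w)) • w)
      ≤ (u - c • w) ⬝ᵥ H *ᵥ (u - c • w) := by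
  set q := (w ⬝ᵥ H *ᵥ u) / (w ⬝ᵥ H *ᵥ w)
  have hq : w ⬝ᵥ H *ᵥ u = q * (w ⬝ᵥ H *ᵥ w) := (div_mul_cancel₀ _ hw.ne').symm
  simp only [mulVec_sub, mulVec_smul, sub_dotProduct, dotProduct_sub, smul_dotProduct,
    dotProduct_smul, smul_eq_mul]
  rw [hH.dotProduct_mulVec_comm u w, hq]
  -- the two sides differ by `(c - q)² · wᵀHw`
  nlinarith [mul_nonneg hw.le (sq_nonneg (c - q))]

lemma bngd_residual_step (H : Matrix n n ℝ) (u w : n → ℝ) (c s : ℝ) :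
    u - c • (w + s • (H *ᵥ u - c • H *ᵥ w)) = (u - c • w) - (s * c) • H *ᵥ (u - c • w) := by
  rw [mulVec_sub, mulVec_smul]
  module

theorem bngd_residual_contraction_general
    {d : ℕ}
    (H : Matrix (Fin d) (Fin d) ℝ) (hH : H.PosDef)
    (u : Fin d → ℝ)
    (ε : ℝ)
    (g : Fin d → ℝ) (hg : g = H.mulVec u)
    (σ : (Fin d → ℝ) → ℝ) (hσ : ∀ v, σ v = Real.sqrt (v ⬝ᵥ H.mulVec v))
    (normH : (Fin d → ℝ) → ℝ) (hnormH : ∀ x, normH x = Real.sqrt (x ⬝ᵥ H.mulVec x))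
    (a : ℕ → ℝ) (w : ℕ → Fin d → ℝ)
    (hw : ∀ k, w (k + 1) = w k +
      (ε * (a k / σ (w k))) • (g - ((w k ⬝ᵥ g) / (σ (w k)) ^ 2) • H.mulVec (w k)))
    (e : ℕ → Fin d → ℝ)
    (he : ∀ k, e k = u - ((w k ⬝ᵥ g) / (σ (w k)) ^ 2) • w k) :
    ∀ k, w k ≠ 0 → w (k + 1) ≠ 0 →
      normH (e (k + 1)) ≤ normH (u - ((w k ⬝ᵥ g) / (σ (w k)) ^ 2) • w (k + 1)) ∧
      normH (u - ((w k ⬝ᵥ g) / (σ (w k)) ^ 2) • w (k + 1)) ≤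
        (⨆ i, |1 - (ε * (a k / σ (w k)) * ((w k ⬝ᵥ g) / (σ (w k)) ^ 2)) *
            hH.1.eigenvalues i|) * normH (e k) := by
  intro k _ hwk1
  have hσ_sq : σ (w (k + 1)) ^ 2 = w (k + 1) ⬝ᵥ H *ᵥ w (k + 1) := by
    rw [hσ, Real.sq_sqrt (by simpa using hH.posSemidef.dotProduct_mulVec_nonneg (w (k + 1)))]
  have hw_pos : 0 < w (k + 1) ⬝ᵥ H *ᵥ w (k + 1) := by simpa using hH.dotProduct_mulVec_pos hwk1
  refine ⟨?_, ?_⟩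
  · rw [hnormH, hnormH, he, hg, hσ_sq]
    exact Real.sqrt_le_sqrt (hH.1.dotProduct_mulVec_sub_proj_le hw_pos u _)
  · rw [hnormH, hnormH, hw, he, hg, bngd_residual_step]
    exact hH.posSemidef.sqrt_dotProduct_mulVec_sub_smul_mulVec_le _ _

/-- Contraction bound for the BNGD residual:
`‖e_{k+1}‖_H ≤ ‖u − (w_kᵀg/σ(w_k)²)w_{k+1}‖_H ≤ ρ(I − ε̂_k H)·‖e_k‖_H`, where
`ρ(I − tH)` is the maximum of `|1 − t·λ|` over the eigenvalues `λ` of `H`. -/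
theorem bngd_residual_contraction
    {d : ℕ} (hd : 0 < d)
    (H : Matrix (Fin d) (Fin d) ℝ) (hH : H.PosDef)
    (u : Fin d → ℝ) (hu : u ≠ 0)
    (εa ε : ℝ) (hεa : 0 < εa) (hε : 0 < ε)
    (g : Fin d → ℝ) (hg : g = H.mulVec u)
    (σ : (Fin d → ℝ) → ℝ) (hσ : ∀ v, σ v = Real.sqrt (v ⬝ᵥ H.mulVec v))
    (normH : (Fin d → ℝ) → ℝ) (hnormH : ∀ x, normH x = Real.sqrt (x ⬝ᵥ H.mulVec x))
    (a : ℕ → ℝ) (w : ℕ → Fin d → ℝ) (hw0 : w 0 ≠ 0)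
    (ha : ∀ k, a (k + 1) = a k + εa * ((w k ⬝ᵥ g) / σ (w k) - a k))
    (hw : ∀ k, w (k + 1) = w k +
      (ε * (a k / σ (w k))) • (g - ((w k ⬝ᵥ g) / (σ (w k)) ^ 2) • H.mulVec (w k)))
    (e : ℕ → Fin d → ℝ)
    (he : ∀ k, e k = u - ((w k ⬝ᵥ g) / (σ (w k)) ^ 2) • w k) :
    ∀ k, w k ≠ 0 → w (k + 1) ≠ 0 →
      normH (e (k + 1)) ≤ normH (u - ((w k ⬝ᵥ g) / (σ (w k)) ^ 2) • w (k + 1)) ∧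
      normH (u - ((w k ⬝ᵥ g) / (σ (w k)) ^ 2) • w (k + 1)) ≤
        (⨆ i, |1 - (ε * (a k / σ (w k)) * ((w k ⬝ᵥ g) / (σ (w k)) ^ 2)) *
            hH.1.eigenvalues i|) * normH (e k) :=
  bngd_residual_contraction_general H hH u ε g hg σ hσ normH hnormH a w hw e he
end

section
/- Exact norm growth of BNGD weights: For every k with w_k ≠ 0, the BNGD iterates satisfy ‖w_{k+1}‖² = ‖w_k‖² + ε²·(a_k/σ(w_k))²·‖H e_k‖², where e_k := u − (w_kᵀg/σ(w_k)²)w_k and ‖·‖ is the Euclidean norm. In particular the sequence ‖w_k‖ is nondecreasing. -/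
/-!
The BNGD step moves `w` along `H e = g - (wᵀg / wᵀHw) H w`, which is orthogonal to `w` in the
Euclidean inner product, so the squared norm grows by Pythagoras. When `σ(w) = 0` the step
coefficient `a / σ(w)` is `0` (division by zero is `0`), so the step is trivial and the identity
still holds; holding at every `k`, it gives monotonicity at once.
-/

open Matrix

section

variable {ι : Type*} [Fintype ι]

theorem dotProduct_self_add_smul_of_dotProduct_eq_zero {w v : ι → ℝ} (h : w ⬝ᵥ v = 0) (c : ℝ) :
    (w + c • v) ⬝ᵥ (w + c • v) = w ⬝ᵥ w + c ^ 2 * (v ⬝ᵥ v) := by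
  rw [add_dotProduct, dotProduct_add, dotProduct_add, dotProduct_smul, smul_dotProduct,
    dotProduct_smul, smul_dotProduct, dotProduct_comm v w, h, smul_eq_mul, smul_eq_mul,
    smul_eq_mul]
  ring

theorem dotProduct_sub_div_smul_eq_zero {w x y : ι → ℝ} (h : w ⬝ᵥ y ≠ 0) :
    w ⬝ᵥ (x - ((w ⬝ᵥ x) / (w ⬝ᵥ y)) • y) = 0 := by
  rw [dotProduct_sub, dotProduct_smul, smul_eq_mul, div_mul_cancel₀ _ h, sub_self]

theorem Real.sqrt_eq_zero_or_sq_sqrt (q : ℝ) : √q = 0 ∨ √q ^ 2 = q :=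
  (le_or_gt q 0).imp Real.sqrt_eq_zero'.mpr fun hq => Real.sq_sqrt hq.le

theorem dotProduct_self_add_smul_sub_div_smul {w x y : ι → ℝ} {s : ℝ}
    (hs : s = 0 ∨ s ^ 2 = w ⬝ᵥ y) (b c : ℝ) :
    (w + (c * (b / s)) • (x - ((w ⬝ᵥ x) / s ^ 2) • y)) ⬝ᵥ
        (w + (c * (b / s)) • (x - ((w ⬝ᵥ x) / s ^ 2) • y)) =
      w ⬝ᵥ w + c ^ 2 * (b / s) ^ 2 *
        ((x - ((w ⬝ᵥ x) / s ^ 2) • y) ⬝ᵥ (x - ((w ⬝ᵥ x) / s ^ 2) • y)) := by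
  by_cases hs0 : s = 0
  · simp [hs0]
  have hsq : s ^ 2 = w ⬝ᵥ y := hs.resolve_left hs0
  have hy : w ⬝ᵥ y ≠ 0 := hsq ▸ pow_ne_zero 2 hs0
  rw [hsq, dotProduct_self_add_smul_of_dotProduct_eq_zero (dotProduct_sub_div_smul_eq_zero hy),
    mul_pow]

end

theorem bngd_norm_growth_general
    {d : ℕ}
    (H : Matrix (Fin d) (Fin d) ℝ)
    (u : Fin d → ℝ)
    (ε : ℝ)
    (g : Fin d → ℝ) (hg : g = H.mulVec u)
    (σ : (Fin d → ℝ) → ℝ) (hσ : ∀ v, σ v = Real.sqrt (v ⬝ᵥ H.mulVec v))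
    (a : ℕ → ℝ) (w : ℕ → Fin d → ℝ)
    (hw : ∀ k, w (k + 1) = w k +
      (ε * (a k / σ (w k))) • (g - ((w k ⬝ᵥ g) / (σ (w k)) ^ 2) • H.mulVec (w k)))
    (e : ℕ → Fin d → ℝ)
    (he : ∀ k, e k = u - ((w k ⬝ᵥ g) / (σ (w k)) ^ 2) • w k) :
    (∀ k, w k ≠ 0 →
      w (k + 1) ⬝ᵥ w (k + 1) =
        w k ⬝ᵥ w k + ε ^ 2 * (a k / σ (w k)) ^ 2 * (H.mulVec (e k) ⬝ᵥ H.mulVec (e k))) ∧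
    Monotone fun k => Real.sqrt (w k ⬝ᵥ w k) := by
  have growth : ∀ k, w (k + 1) ⬝ᵥ w (k + 1) =
      w k ⬝ᵥ w k + ε ^ 2 * (a k / σ (w k)) ^ 2 * (H.mulVec (e k) ⬝ᵥ H.mulVec (e k)) := by
    intro k
    rw [hw k, he k, mulVec_sub, mulVec_smul, ← hg, hσ]
    exact dotProduct_self_add_smul_sub_div_smul (Real.sqrt_eq_zero_or_sq_sqrt _) _ _
  refine ⟨fun k _ => growth k, monotone_nat_of_le_succ fun k => Real.sqrt_le_sqrt ?_⟩
  rw [growth k]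
  exact le_add_of_nonneg_right
    (mul_nonneg (by positivity) (dotProduct_self_star_nonneg (H.mulVec (e k))))

/-- Exact norm growth of BNGD weights:
`‖w_{k+1}‖² = ‖w_k‖² + ε²·(a_k/σ(w_k))²·‖H e_k‖²`; in particular `‖w_k‖` is nondecreasing. -/
theorem bngd_norm_growth
    {d : ℕ} (hd : 0 < d)
    (H : Matrix (Fin d) (Fin d) ℝ) (hH : H.PosDef)
    (u : Fin d → ℝ) (hu : u ≠ 0)
    (εa ε : ℝ) (hεa : 0 < εa) (hε : 0 < ε)
    (g : Fin d → ℝ) (hg : g = H.mulVec u)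
    (σ : (Fin d → ℝ) → ℝ) (hσ : ∀ v, σ v = Real.sqrt (v ⬝ᵥ H.mulVec v))
    (a : ℕ → ℝ) (w : ℕ → Fin d → ℝ) (hw0 : w 0 ≠ 0)
    (ha : ∀ k, a (k + 1) = a k + εa * ((w k ⬝ᵥ g) / σ (w k) - a k))
    (hw : ∀ k, w (k + 1) = w k +
      (ε * (a k / σ (w k))) • (g - ((w k ⬝ᵥ g) / (σ (w k)) ^ 2) • H.mulVec (w k)))
    (e : ℕ → Fin d → ℝ)
    (he : ∀ k, e k = u - ((w k ⬝ᵥ g) / (σ (w k)) ^ 2) • w k) :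
    (∀ k, w k ≠ 0 →
      w (k + 1) ⬝ᵥ w (k + 1) =
        w k ⬝ᵥ w k + ε ^ 2 * (a k / σ (w k)) ^ 2 * (H.mulVec (e k) ⬝ᵥ H.mulVec (e k))) ∧
    Monotone fun k => Real.sqrt (w k ⬝ᵥ w k) :=
  bngd_norm_growth_general H u ε g hg σ hσ a w hw e he
end

section
/- Convergence of BNGD under effective step size bounds: Let 0 < ε_a < 2. Suppose there exist positive numbers ε⁻ > 0 and ε̂⁺ < 2/λ_max such that the effective step size ε̂_k := ε(a_k/σ(w_k))(w_kᵀg/σ(w_k)²) satisfies ε⁻/‖w_k‖² ≤ ε̂_k ≤ ε̂⁺ for all k. Then the BNGD iterates (a_k, w_k) converge to a limit (a*, w*) where w* is a nonzero scalar multiple of u and a* = w*ᵀg/σ(w*) = ±√(uᵀHu); i.e., (a*, w*) is a global minimizer of the BN-OLS objective. -/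
/-!
Write `Q x = xᵀHx`, `r w = u - (wᵀHu / Q w) • w` for the `H`-orthogonal residual of `u` against
`w`, and `L w = Q (r w) = 2 min_a J(a, w)`. The BNGD step is `w' = w + η • H r w`, and
`wᵀH r w = 0`, so `‖w‖²` is nondecreasing and grows by `η² ‖H r w‖² ≲ L w / ‖w‖²`. Comparing
`r w'` with `u - (wᵀHu / Q w) • w' = (1 - ε̂ H) r w` gives
`L w' ≤ max (1 - ε⁻ λ_min / ‖w‖²) (ε̂⁺ λ_max - 1)² L w`. Hence while `‖w‖²` is large the loss
drops by a fraction `∝ 1 / ‖w‖²` of itself, which pays for the growth of `‖w‖²`; so `‖w‖²` stays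
bounded, the contraction factor is uniformly below `1`, and `L` and the steps decay
geometrically. The limit of `w_k` is nonzero with `L = 0`, i.e. parallel to `u`, and `a_k`, a
stable linear filter (`|1 - ε_a| < 1`) of the converging targets `w_kᵀg / σ(w_k)`, converges to
the target of the limit.
-/

open Matrix Filter Topology

noncomputable section

lemma Matrix.PosSemidef.dotProduct_mulVec_self_nonneg {ι : Type*} [Fintype ι]
    {A : Matrix ι ι ℝ} (hA : A.PosSemidef) (x : ι → ℝ) : 0 ≤ x ⬝ᵥ A *ᵥ x := by
  simpa using hA.dotProduct_mulVec_nonneg x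

lemma Matrix.PosDef.dotProduct_mulVec_self_pos {ι : Type*} [Fintype ι]
    {A : Matrix ι ι ℝ} (hA : A.PosDef) {x : ι → ℝ} (hx : x ≠ 0) : 0 < x ⬝ᵥ A *ᵥ x := by
  simpa using hA.dotProduct_mulVec_pos hx

namespace Matrix.IsHermitian

variable {ι : Type*} [Fintype ι] {A : Matrix ι ι ℝ}

lemma dotProduct_mulVec_comm_s6 (hA : A.IsHermitian) (x y : ι → ℝ) :
    x ⬝ᵥ A *ᵥ y = y ⬝ᵥ A *ᵥ x := by
  rw [dotProduct_mulVec, ← mulVec_transpose, ← conjTranspose_eq_transpose_of_trivial, hA.eq,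
    dotProduct_comm]

variable [DecidableEq ι] (hA : A.IsHermitian)

def eigenCoords : (ι → ℝ) →ₗ[ℝ] ι → ℝ :=
  (star (hA.eigenvectorUnitary : Matrix ι ι ℝ)).mulVecLin

lemma eigenCoords_mulVec (x : ι → ℝ) :
    hA.eigenCoords (A *ᵥ x) = hA.eigenvalues * hA.eigenCoords x := by
  set U : Matrix ι ι ℝ := ↑hA.eigenvectorUnitary
  have hdiag : star U * A * U = diagonal hA.eigenvalues := by
    simpa [Unitary.conjStarAlgAut_star_apply] using hA.conjStarAlgAut_star_eigenvectorUnitary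
  have hcomm : star U * A = diagonal hA.eigenvalues * star U := by
    rw [← hdiag, mul_assoc _ U, Unitary.mul_star_self_of_mem hA.eigenvectorUnitary.2, mul_one]
  ext i
  change (star U *ᵥ A *ᵥ x) i = _
  rw [mulVec_mulVec, hcomm, ← mulVec_mulVec, mulVec_diagonal]
  rfl

lemma dotProduct_eigenCoords (x z : ι → ℝ) :
    hA.eigenCoords x ⬝ᵥ hA.eigenCoords z = x ⬝ᵥ z := by
  set U : Matrix ι ι ℝ := ↑hA.eigenvectorUnitary
  have hU : (star U)ᵀ * star U = 1 := by
    rw [star_eq_conjTranspose, conjTranspose_eq_transpose_of_trivial, transpose_transpose]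
    exact Unitary.mul_star_self_of_mem hA.eigenvectorUnitary.2
  change star U *ᵥ x ⬝ᵥ star U *ᵥ z = _
  rw [dotProduct_mulVec, ← vecMul_transpose, vecMul_vecMul, hU, vecMul_one]

lemma dotProduct_self_eq_sum (x : ι → ℝ) : x ⬝ᵥ x = ∑ i, hA.eigenCoords x i ^ 2 := by
  rw [← hA.dotProduct_eigenCoords x x]
  simp only [dotProduct, sq]

lemma dotProduct_mulVec_eq_sum (x : ι → ℝ) :
    x ⬝ᵥ A *ᵥ x = ∑ i, hA.eigenvalues i * hA.eigenCoords x i ^ 2 := by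
  rw [← hA.dotProduct_eigenCoords x, eigenCoords_mulVec]
  simp only [dotProduct, Pi.mul_apply]
  exact Finset.sum_congr rfl fun i _ => by ring

lemma mul_dotProduct_self_le_dotProduct_mulVec {l : ℝ} (hl : ∀ i, l ≤ hA.eigenvalues i)
    (x : ι → ℝ) : l * (x ⬝ᵥ x) ≤ x ⬝ᵥ A *ᵥ x := by
  rw [hA.dotProduct_self_eq_sum, hA.dotProduct_mulVec_eq_sum, Finset.mul_sum]
  gcongr with i
  exact hl i

end Matrix.IsHermitian

namespace Matrix.PosSemidef

variable {ι : Type*} [Fintype ι] [DecidableEq ι] {A : Matrix ι ι ℝ} (hA : A.PosSemidef)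

lemma mulVec_dotProduct_mulVec_le {l : ℝ} (hl : ∀ i, hA.1.eigenvalues i ≤ l) (x : ι → ℝ) :
    A *ᵥ x ⬝ᵥ A *ᵥ x ≤ l * (x ⬝ᵥ A *ᵥ x) := by
  rw [← hA.1.dotProduct_eigenCoords, hA.1.eigenCoords_mulVec, hA.1.dotProduct_mulVec_eq_sum,
    Finset.mul_sum]
  refine Finset.sum_le_sum fun i _ => ?_
  calc (hA.1.eigenvalues * hA.1.eigenCoords x) i * (hA.1.eigenvalues * hA.1.eigenCoords x) i
      = hA.1.eigenvalues i * (hA.1.eigenvalues i * hA.1.eigenCoords x i ^ 2) := by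
        simp only [Pi.mul_apply]; ring
    _ ≤ l * (hA.1.eigenvalues i * hA.1.eigenCoords x i ^ 2) :=
        mul_le_mul_of_nonneg_right (hl i) (mul_nonneg (hA.eigenvalues_nonneg i) (sq_nonneg _))

lemma dotProduct_mulVec_sub_smul_mulVec_le_s6 {t μ : ℝ}
    (hμ : ∀ i, |1 - t * hA.1.eigenvalues i| ≤ μ) (x : ι → ℝ) :
    (x - t • A *ᵥ x) ⬝ᵥ A *ᵥ (x - t • A *ᵥ x) ≤ μ ^ 2 * (x ⬝ᵥ A *ᵥ x) := by
  rw [hA.1.dotProduct_mulVec_eq_sum, hA.1.dotProduct_mulVec_eq_sum, Finset.mul_sum]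
  refine Finset.sum_le_sum fun i _ => ?_
  simp only [map_sub, map_smul, hA.1.eigenCoords_mulVec, Pi.sub_apply, Pi.smul_apply,
    Pi.mul_apply, smul_eq_mul]
  set e := hA.1.eigenvalues i
  set y := hA.1.eigenCoords x i
  have hsq : (1 - t * e) ^ 2 ≤ μ ^ 2 := sq_le_sq' (abs_le.mp (hμ i)).1 (abs_le.mp (hμ i)).2
  calc e * (y - t * (e * y)) ^ 2 = (1 - t * e) ^ 2 * (e * y ^ 2) := by ring
    _ ≤ μ ^ 2 * (e * y ^ 2) :=
        mul_le_mul_of_nonneg_right hsq (mul_nonneg (hA.eigenvalues_nonneg i) (sq_nonneg _))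

end Matrix.PosSemidef

section Projection

variable {ι : Type*} [Fintype ι] (H : Matrix ι ι ℝ) (u : ι → ℝ)

def projCoeff (w : ι → ℝ) : ℝ := (w ⬝ᵥ H *ᵥ u) / (w ⬝ᵥ H *ᵥ w)

def projResidual (w : ι → ℝ) : ι → ℝ := u - projCoeff H u w • w

variable {H u}

lemma dotProduct_mulVec_projResidual {w : ι → ℝ} (hw : w ⬝ᵥ H *ᵥ w ≠ 0) :
    w ⬝ᵥ H *ᵥ projResidual H u w = 0 := by
  rw [projResidual, projCoeff, mulVec_sub, mulVec_smul, dotProduct_sub, dotProduct_smul,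
    smul_eq_mul, div_mul_cancel₀ _ hw, sub_self]

lemma dotProduct_mulVec_sub_smul_eq (hH : H.IsHermitian) {w : ι → ℝ}
    (hw : w ⬝ᵥ H *ᵥ w ≠ 0) (s : ℝ) :
    (u - s • w) ⬝ᵥ H *ᵥ (u - s • w) = projResidual H u w ⬝ᵥ H *ᵥ projResidual H u w +
      (s - projCoeff H u w) ^ 2 * (w ⬝ᵥ H *ᵥ w) := by
  have hsplit : u - s • w = projResidual H u w - (s - projCoeff H u w) • w := by
    rw [projResidual, sub_smul]
    abel
  have horth := dotProduct_mulVec_projResidual (u := u) hw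
  rw [hsplit]
  simp only [mulVec_sub, mulVec_smul, sub_dotProduct, dotProduct_sub, smul_dotProduct,
    dotProduct_smul, smul_eq_mul, hH.dotProduct_mulVec_comm_s6 (projResidual H u w) w, horth]
  ring

lemma dotProduct_mulVec_self_eq_projResidual_add (hH : H.IsHermitian) {w : ι → ℝ}
    (hw : w ⬝ᵥ H *ᵥ w ≠ 0) :
    u ⬝ᵥ H *ᵥ u = projResidual H u w ⬝ᵥ H *ᵥ projResidual H u w +
      (w ⬝ᵥ H *ᵥ u) ^ 2 / (w ⬝ᵥ H *ᵥ w) := by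
  have h := dotProduct_mulVec_sub_smul_eq (u := u) hH hw 0
  rw [zero_smul, sub_zero] at h
  rw [h, projCoeff]
  field_simp
  ring

lemma dotProduct_mulVec_projResidual_le (hH : H.PosSemidef) {w : ι → ℝ}
    (hw : w ⬝ᵥ H *ᵥ w ≠ 0) (s : ℝ) :
    projResidual H u w ⬝ᵥ H *ᵥ projResidual H u w ≤ (u - s • w) ⬝ᵥ H *ᵥ (u - s • w) := by
  rw [dotProduct_mulVec_sub_smul_eq hH.1 hw]
  exact le_add_of_nonneg_right (mul_nonneg (sq_nonneg _) (hH.dotProduct_mulVec_self_nonneg w))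

lemma abs_div_sqrt_le_sqrt (hH : H.PosSemidef) {w : ι → ℝ} (hw : w ⬝ᵥ H *ᵥ w ≠ 0) :
    |(w ⬝ᵥ H *ᵥ u) / √(w ⬝ᵥ H *ᵥ w)| ≤ √(u ⬝ᵥ H *ᵥ u) := by
  have hQw : 0 ≤ w ⬝ᵥ H *ᵥ w := hH.dotProduct_mulVec_self_nonneg w
  have hQr : 0 ≤ projResidual H u w ⬝ᵥ H *ᵥ projResidual H u w :=
    hH.dotProduct_mulVec_self_nonneg _
  rw [← Real.sqrt_sq_eq_abs, div_pow, Real.sq_sqrt hQw]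
  exact Real.sqrt_le_sqrt
    (by linarith [dotProduct_mulVec_self_eq_projResidual_add (u := u) hH.1 hw])

lemma div_sqrt_sq_eq_of_projResidual_eq_zero (hH : H.PosSemidef) {w : ι → ℝ}
    (hw : w ⬝ᵥ H *ᵥ w ≠ 0) (h : projResidual H u w = 0) :
    ((w ⬝ᵥ H *ᵥ u) / √(w ⬝ᵥ H *ᵥ w)) ^ 2 = u ⬝ᵥ H *ᵥ u := by
  rw [div_pow, Real.sq_sqrt (hH.dotProduct_mulVec_self_nonneg w),
    dotProduct_mulVec_self_eq_projResidual_add (u := u) hH.1 hw, h, zero_dotProduct, zero_add]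

lemma exists_eq_smul_of_projResidual_eq_zero (hu : u ≠ 0) {w : ι → ℝ}
    (h : projResidual H u w = 0) : ∃ c : ℝ, c ≠ 0 ∧ w = c • u := by
  have hu' : u = projCoeff H u w • w := sub_eq_zero.mp h
  have hc : projCoeff H u w ≠ 0 := fun h0 => hu (by rw [hu', h0, zero_smul])
  exact ⟨(projCoeff H u w)⁻¹, inv_ne_zero hc, by rw [eq_inv_smul_iff₀ hc, ← hu']⟩

lemma continuousAt_dotProduct_mulVec_div_sqrt (hH : H.PosDef) {w : ι → ℝ} (hw : w ≠ 0) :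
    ContinuousAt (fun v => v ⬝ᵥ H *ᵥ u / √(v ⬝ᵥ H *ᵥ v)) w := by
  fun_prop (disch := exact Real.sqrt_ne_zero'.mpr (hH.dotProduct_mulVec_self_pos hw))

lemma projResidual_eq_zero_of_tendsto (hH : H.PosDef) {w : ℕ → ι → ℝ} {w' : ι → ℝ}
    (hlim : Tendsto w atTop (𝓝 w')) (hw' : w' ≠ 0)
    (hL : Tendsto (fun k => projResidual H u (w k) ⬝ᵥ H *ᵥ projResidual H u (w k)) atTop (𝓝 0)) :
    projResidual H u w' = 0 := by
  have hQ' : w' ⬝ᵥ H *ᵥ w' ≠ 0 := (hH.dotProduct_mulVec_self_pos hw').ne'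
  have hcont : ContinuousAt (fun v => projResidual H u v ⬝ᵥ H *ᵥ projResidual H u v) w' := by
    simp only [projResidual, projCoeff]
    fun_prop (disch := exact hQ')
  have hzero := tendsto_nhds_unique (hcont.tendsto.comp hlim) hL
  by_contra h
  exact (hH.dotProduct_mulVec_self_pos h).ne' hzero

end Projection

lemma abs_one_sub_mul_le_max {t l a b p q : ℝ} (ha : 0 ≤ a) (hp : 0 ≤ p) (hat : a ≤ t)
    (htb : t ≤ b) (hpl : p ≤ l) (hlq : l ≤ q) : |1 - t * l| ≤ max (1 - a * p) (b * q - 1) := by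
  have hlo : a * p ≤ t * l := mul_le_mul hat hpl hp (ha.trans hat)
  have hhi : t * l ≤ b * q := mul_le_mul htb hlq (hp.trans hpl) (ha.trans (hat.trans htb))
  rw [abs_le]
  constructor
  · linarith [le_max_right (1 - a * p) (b * q - 1)]
  · linarith [le_max_left (1 - a * p) (b * q - 1)]

section Step

variable {ι : Type*} [Fintype ι] {H : Matrix ι ι ℝ} {u w : ι → ℝ}

lemma dotProduct_self_add_smul_mulVec_projResidual (hw : w ⬝ᵥ H *ᵥ w ≠ 0) (η : ℝ) :
    (w + η • H *ᵥ projResidual H u w) ⬝ᵥ (w + η • H *ᵥ projResidual H u w) =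
      w ⬝ᵥ w + (η • H *ᵥ projResidual H u w) ⬝ᵥ (η • H *ᵥ projResidual H u w) := by
  have horth := dotProduct_mulVec_projResidual (u := u) hw
  simp only [add_dotProduct, dotProduct_add, dotProduct_smul, smul_eq_mul, horth,
    dotProduct_comm _ w]
  ring

variable [DecidableEq ι]

lemma dotProduct_mulVec_projResidual_add_smul_le (hH : H.PosSemidef) {η μ : ℝ}
    (hw' : (w + η • H *ᵥ projResidual H u w) ⬝ᵥ H *ᵥ (w + η • H *ᵥ projResidual H u w) ≠ 0)
    (hμ : ∀ i, |1 - projCoeff H u w * η * hH.1.eigenvalues i| ≤ μ) :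
    projResidual H u (w + η • H *ᵥ projResidual H u w) ⬝ᵥ
        H *ᵥ projResidual H u (w + η • H *ᵥ projResidual H u w) ≤
      μ ^ 2 * (projResidual H u w ⬝ᵥ H *ᵥ projResidual H u w) := by
  set r := projResidual H u w
  set s := projCoeff H u w
  have hshift : u - s • (w + η • H *ᵥ r) = r - (s * η) • H *ᵥ r := by
    simp only [r, projResidual, smul_add, mul_smul]
    abel
  calc _ ≤ (u - s • (w + η • H *ᵥ r)) ⬝ᵥ H *ᵥ (u - s • (w + η • H *ᵥ r)) :=
        dotProduct_mulVec_projResidual_le hH hw' s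
    _ ≤ μ ^ 2 * (r ⬝ᵥ H *ᵥ r) := hshift ▸ hH.dotProduct_mulVec_sub_smul_mulVec_le_s6 hμ r

lemma smul_mulVec_dotProduct_self_le (hH : H.PosDef) {lmin lmax K η : ℝ} (hlmin : 0 < lmin)
    (hlmin_le : ∀ i, lmin ≤ hH.1.eigenvalues i) (hle_lmax : ∀ i, hH.1.eigenvalues i ≤ lmax)
    (hw : w ≠ 0) (hη : η ^ 2 * (w ⬝ᵥ H *ᵥ w) ≤ K) (x : ι → ℝ) :
    (η • H *ᵥ x) ⬝ᵥ (η • H *ᵥ x) ≤ K * lmax / lmin * (x ⬝ᵥ H *ᵥ x) / (w ⬝ᵥ w) := by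
  have hww : 0 < w ⬝ᵥ w := by simpa using dotProduct_self_star_pos_iff.mpr hw
  have hK : 0 ≤ K :=
    (mul_nonneg (sq_nonneg η) (hH.posSemidef.dotProduct_mulVec_self_nonneg w)).trans hη
  have hη' : η ^ 2 ≤ K / (lmin * (w ⬝ᵥ w)) := by
    rw [le_div_iff₀ (by positivity)]
    calc η ^ 2 * (lmin * (w ⬝ᵥ w)) ≤ η ^ 2 * (w ⬝ᵥ H *ᵥ w) := mul_le_mul_of_nonneg_left
          (hH.1.mul_dotProduct_self_le_dotProduct_mulVec hlmin_le w) (sq_nonneg η)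
      _ ≤ K := hη
  calc (η • H *ᵥ x) ⬝ᵥ (η • H *ᵥ x) = η ^ 2 * (H *ᵥ x ⬝ᵥ H *ᵥ x) := by
        simp only [smul_dotProduct, dotProduct_smul, smul_eq_mul]; ring
    _ ≤ K / (lmin * (w ⬝ᵥ w)) * (lmax * (x ⬝ᵥ H *ᵥ x)) :=
        mul_le_mul hη' (hH.posSemidef.mulVec_dotProduct_mulVec_le hle_lmax x)
          (by simpa using dotProduct_star_self_nonneg (H *ᵥ x)) (by positivity)
    _ = K * lmax / lmin * (x ⬝ᵥ H *ᵥ x) / (w ⬝ᵥ w) := by field_simp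

lemma dotProduct_mulVec_projResidual_add_smul_le_max (hH : H.PosSemidef)
    {η εm εhp lmin lmax : ℝ}
    (hw' : (w + η • H *ᵥ projResidual H u w) ⬝ᵥ H *ᵥ (w + η • H *ᵥ projResidual H u w) ≠ 0)
    (hlmin : 0 ≤ lmin) (hlmin_le : ∀ i, lmin ≤ hH.1.eigenvalues i)
    (hle_lmax : ∀ i, hH.1.eigenvalues i ≤ lmax) (hεm : 0 ≤ εm)
    (hlo : εm / (w ⬝ᵥ w) ≤ projCoeff H u w * η) (hhi : projCoeff H u w * η ≤ εhp) :
    projResidual H u (w + η • H *ᵥ projResidual H u w) ⬝ᵥ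
        H *ᵥ projResidual H u (w + η • H *ᵥ projResidual H u w) ≤
      max (1 - εm * lmin / (w ⬝ᵥ w)) (max (εhp * lmax - 1) 0) ^ 2 *
        (projResidual H u w ⬝ᵥ H *ᵥ projResidual H u w) := by
  have hε : 0 ≤ εm / (w ⬝ᵥ w) :=
    div_nonneg hεm (by simpa using dotProduct_star_self_nonneg w)
  refine dotProduct_mulVec_projResidual_add_smul_le hH hw' fun i => ?_
  calc _ ≤ max (1 - εm / (w ⬝ᵥ w) * lmin) (εhp * lmax - 1) :=
        abs_one_sub_mul_le_max hε hlmin hlo hhi (hlmin_le i) (hle_lmax i)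
    _ ≤ _ := by
        rw [div_mul_eq_mul_div]
        exact max_le_max le_rfl (le_max_left _ _)

end Step

section Recurrence

variable {x b : ℕ → ℝ} {c : ℝ}

lemma abs_le_pow_mul_add_of_affine_rec {B : ℝ} (hc : |c| < 1)
    (hrec : ∀ k, x (k + 1) = c * x k + b k) (hb : ∀ k, |b k| ≤ B) (k : ℕ) :
    |x k| ≤ |c| ^ k * |x 0| + B / (1 - |c|) := by
  have h1c : 0 < 1 - |c| := by linarith
  induction k with
  | zero => simpa using div_nonneg ((abs_nonneg _).trans (hb 0)) h1c.le
  | succ k ih =>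
    calc |x (k + 1)| ≤ |c| * |x k| + B := by
          rw [hrec, ← abs_mul]
          exact (abs_add_le _ _).trans (add_le_add_right (hb k) _)
      _ ≤ |c| * (|c| ^ k * |x 0| + B / (1 - |c|)) + B := by gcongr
      _ = |c| ^ (k + 1) * |x 0| + B / (1 - |c|) := by field_simp; ring

lemma exists_abs_le_of_affine_rec {B : ℝ} (hc : |c| < 1) (hrec : ∀ k, x (k + 1) = c * x k + b k)
    (hb : ∀ k, |b k| ≤ B) : ∃ A, ∀ k, |x k| ≤ A :=
  ⟨|x 0| + B / (1 - |c|), fun k => (abs_le_pow_mul_add_of_affine_rec hc hrec hb k).trans <| by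
    gcongr
    exact mul_le_of_le_one_left (abs_nonneg _) (pow_le_one₀ (abs_nonneg _) hc.le)⟩

lemma tendsto_zero_of_affine_rec (hc : |c| < 1) (hrec : ∀ k, x (k + 1) = c * x k + b k)
    (hb : Tendsto b atTop (𝓝 0)) : Tendsto x atTop (𝓝 0) := by
  have h1c : 0 < 1 - |c| := by linarith
  rw [Metric.tendsto_atTop]
  intro δ hδ
  obtain ⟨K, hK⟩ := Metric.tendsto_atTop.mp hb ((1 - |c|) * (δ / 2)) (by positivity)
  have htail : ∀ m, |x (K + m)| ≤ |c| ^ m * |x K| + δ / 2 := fun m => by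
    have := abs_le_pow_mul_add_of_affine_rec (x := fun m => x (K + m)) (b := fun m => b (K + m))
      (B := (1 - |c|) * (δ / 2)) hc (fun m => hrec (K + m))
      (fun m => by simpa using (hK (K + m) (Nat.le_add_right K m)).le) m
    rwa [mul_div_cancel_left₀ _ h1c.ne'] at this
  obtain ⟨M, hM⟩ := Metric.tendsto_atTop.mp
    ((tendsto_pow_atTop_nhds_zero_of_lt_one (abs_nonneg c) hc).mul_const |x K|) (δ / 2)
    (by positivity)
  refine ⟨K + M, fun k hk => ?_⟩
  obtain ⟨m, rfl⟩ := Nat.exists_eq_add_of_le (le_of_add_le_left hk)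
  have := hM m (by omega)
  rw [Real.dist_eq, zero_mul, sub_zero, abs_of_nonneg (by positivity)] at this
  rw [Real.dist_eq, sub_zero]
  linarith [htail m]

lemma tendsto_of_affine_rec {l : ℝ} (hc : |c| < 1) (hrec : ∀ k, x (k + 1) = c * x k + b k)
    (hb : Tendsto b atTop (𝓝 ((1 - c) * l))) : Tendsto x atTop (𝓝 l) := by
  have h := tendsto_zero_of_affine_rec (x := fun k => x k - l) (b := fun k => b k - (1 - c) * l) hc
    (fun k => by rw [hrec]; ring) (by simpa using hb.sub_const ((1 - c) * l))
  simpa using h.add_const l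

end Recurrence

section GrowthContraction

variable {n L : ℕ → ℝ} {c C β : ℝ}

lemma bddAbove_range_of_growth_of_contraction (hc : 0 < c) (hC : 0 ≤ C) (hβ0 : 0 ≤ β)
    (hβ1 : β < 1) (hn : ∀ k, 0 < n k) (hmono : Monotone n) (hL : ∀ k, 0 ≤ L k)
    (hgrowth : ∀ k, n (k + 1) ≤ n k + C * L k / n k)
    (hdecay : ∀ k, L (k + 1) ≤ max (1 - c / n k) β ^ 2 * L k) : BddAbove (Set.range n) := by
  have hLanti : Antitone L := antitone_nat_of_succ_le fun k => by
    have h0 : 0 ≤ max (1 - c / n k) β := le_max_of_le_right hβ0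
    have h1 : max (1 - c / n k) β ≤ 1 :=
      max_le (by linarith [div_pos hc (hn k)]) hβ1.le
    nlinarith [hdecay k, hL k, mul_le_one₀ h1 h0 h1]
  -- Once `n k` exceeds `T`, the growth of `n` is paid for by the decrease of `L`, so the
  -- potential `n + C / c * L` can only increase at steps where `n k ≤ T`.
  set T := c / (1 - β)
  have hlarge : ∀ k, T < n k → C * L k / n k ≤ C / c * (L k - L (k + 1)) := fun k hk => by
    have hcn : c / n k < 1 - β := by
      rwa [div_lt_iff₀ (hn k), mul_comm, ← div_lt_iff₀ (by linarith)]
    have hμ : max (1 - c / n k) β = 1 - c / n k := max_eq_left (by linarith)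
    have hcn0 : 0 < c / n k := div_pos hc (hn k)
    have hstep : c / n k * L k ≤ L k - L (k + 1) := by
      have hsq : (1 - c / n k) ^ 2 * L k ≤ (1 - c / n k) * L k :=
        mul_le_mul_of_nonneg_right (by nlinarith) (hL k)
      linarith [hμ ▸ hdecay k]
    calc C * L k / n k = C / c * (c / n k * L k) := by field_simp
      _ ≤ C / c * (L k - L (k + 1)) := by gcongr
  refine ⟨max (n 0 + C / c * L 0) (T + C * L 0 / n 0 + C / c * L 0), ?_⟩
  rintro _ ⟨k, rfl⟩
  suffices hΦ : n k + C / c * L k ≤ max (n 0 + C / c * L 0) (T + C * L 0 / n 0 + C / c * L 0) by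
    linarith [mul_nonneg (div_nonneg hC hc.le) (hL k)]
  induction k with
  | zero => exact le_max_left _ _
  | succ k ih =>
    by_cases hk : T < n k
    · linarith [hgrowth k, hlarge k hk]
    · refine le_max_of_le_right ?_
      have h1 : C * L k / n k ≤ C * L 0 / n 0 :=
        div_le_div₀ (mul_nonneg hC (hL 0)) (mul_le_mul_of_nonneg_left (hLanti k.zero_le) hC)
          (hn 0) (hmono k.zero_le)
      have h2 : C / c * L (k + 1) ≤ C / c * L 0 :=
        mul_le_mul_of_nonneg_left (hLanti (k + 1).zero_le) (div_nonneg hC hc.le)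
      linarith [hgrowth k, not_lt.mp hk]

lemma exists_contraction_of_growth (hc : 0 < c) (hC : 0 ≤ C) (hβ0 : 0 ≤ β)
    (hβ1 : β < 1) (hn : ∀ k, 0 < n k) (hmono : Monotone n) (hL : ∀ k, 0 ≤ L k)
    (hgrowth : ∀ k, n (k + 1) ≤ n k + C * L k / n k)
    (hdecay : ∀ k, L (k + 1) ≤ max (1 - c / n k) β ^ 2 * L k) :
    ∃ ρ, 0 ≤ ρ ∧ ρ < 1 ∧ ∀ k, L (k + 1) ≤ ρ ^ 2 * L k := by
  obtain ⟨M, hM⟩ := bddAbove_range_of_growth_of_contraction hc hC hβ0 hβ1 hn hmono hL hgrowth hdecay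
  have hnM : ∀ k, n k ≤ M := fun k => hM ⟨k, rfl⟩
  have hM0 : 0 < M := (hn 0).trans_le (hnM 0)
  refine ⟨max (1 - c / M) β, le_max_of_le_right hβ0,
    max_lt (by linarith [div_pos hc hM0]) hβ1, fun k => (hdecay k).trans ?_⟩
  have hcM : c / M ≤ c / n k := div_le_div_of_nonneg_left hc.le (hn k) (hnM k)
  exact mul_le_mul_of_nonneg_right
    (pow_le_pow_left₀ (le_max_of_le_right hβ0) (max_le_max (by linarith) le_rfl) 2) (hL k)

end GrowthContraction

lemma dist_le_sqrt_dotProduct_sub {ι : Type*} [Fintype ι] (x y : ι → ℝ) :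
    dist x y ≤ √((x - y) ⬝ᵥ (x - y)) := by
  refine (dist_pi_le_iff (Real.sqrt_nonneg _)).mpr fun i => ?_
  rw [Real.dist_eq, ← Real.sqrt_sq_eq_abs]
  refine Real.sqrt_le_sqrt ?_
  simpa [dotProduct, sq] using Finset.single_le_sum (f := fun j => (x j - y j) * (x j - y j))
    (fun j _ => mul_self_nonneg _) (Finset.mem_univ i)

lemma cauchySeq_of_dotProduct_sub_le_geometric {ι : Type*} [Fintype ι] {w : ℕ → ι → ℝ}
    {D ρ : ℝ} (hρ0 : 0 ≤ ρ) (hρ1 : ρ < 1)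
    (h : ∀ k, (w (k + 1) - w k) ⬝ᵥ (w (k + 1) - w k) ≤ D * (ρ ^ 2) ^ k) : CauchySeq w := by
  refine cauchySeq_of_le_geometric ρ √D hρ1 fun k => ?_
  calc dist (w k) (w (k + 1)) = dist (w (k + 1)) (w k) := dist_comm _ _
    _ ≤ √((w (k + 1) - w k) ⬝ᵥ (w (k + 1) - w k)) := dist_le_sqrt_dotProduct_sub _ _
    _ ≤ √(D * (ρ ^ 2) ^ k) := Real.sqrt_le_sqrt (h k)
    _ = √D * ρ ^ k := by
      rw [← pow_mul, mul_comm 2 k, pow_mul, Real.sqrt_mul' _ (by positivity),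
        Real.sqrt_sq (by positivity)]

lemma exists_tendsto_of_growth_of_contraction {ι : Type*} [Fintype ι] {w : ℕ → ι → ℝ}
    {L : ℕ → ℝ} {c C β : ℝ} (hc : 0 < c) (hC : 0 ≤ C) (hβ0 : 0 ≤ β) (hβ1 : β < 1)
    (hw : ∀ k, w k ≠ 0) (hL : ∀ k, 0 ≤ L k)
    (hincr : ∀ k, w (k + 1) ⬝ᵥ w (k + 1) = w k ⬝ᵥ w k + (w (k + 1) - w k) ⬝ᵥ (w (k + 1) - w k))
    (hgrowth : ∀ k, (w (k + 1) - w k) ⬝ᵥ (w (k + 1) - w k) ≤ C * L k / (w k ⬝ᵥ w k))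
    (hdecay : ∀ k, L (k + 1) ≤ max (1 - c / (w k ⬝ᵥ w k)) β ^ 2 * L k) :
    ∃ w', w' ≠ 0 ∧ Tendsto w atTop (𝓝 w') ∧ Tendsto L atTop (𝓝 0) := by
  set n : ℕ → ℝ := fun k => w k ⬝ᵥ w k
  have hn : ∀ k, 0 < n k := fun k => by simpa using dotProduct_self_star_pos_iff.mpr (hw k)
  have hmono : Monotone n := monotone_nat_of_le_succ fun k => by
    rw [show n (k + 1) = _ from hincr k]
    exact le_add_of_nonneg_right (by simpa using dotProduct_star_self_nonneg (w (k + 1) - w k))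
  obtain ⟨ρ, hρ0, hρ1, hρ⟩ := exists_contraction_of_growth hc hC hβ0 hβ1 hn hmono hL
    (fun k => by linarith [hincr k, hgrowth k]) hdecay
  have hLgeo : ∀ k, L k ≤ (ρ ^ 2) ^ k * L 0 := fun k => le_geom (sq_nonneg ρ) k fun j _ => hρ j
  obtain ⟨w', hlim⟩ := cauchySeq_tendsto_of_complete <|
    cauchySeq_of_dotProduct_sub_le_geometric (D := C * L 0 / n 0) hρ0 hρ1 fun k =>
      calc _ ≤ C * L k / n k := hgrowth k
        _ ≤ C * ((ρ ^ 2) ^ k * L 0) / n 0 :=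
          div_le_div₀ (mul_nonneg hC (mul_nonneg (by positivity) (hL 0)))
            (mul_le_mul_of_nonneg_left (hLgeo k) hC) (hn 0) (hmono k.zero_le)
        _ = C * L 0 / n 0 * (ρ ^ 2) ^ k := by ring
  have hw' : w' ≠ 0 := by
    rintro rfl
    have hn0 : Tendsto n atTop (𝓝 ((0 : ι → ℝ) ⬝ᵥ 0)) :=
      ((continuous_id.dotProduct continuous_id).tendsto _).comp hlim
    rw [dotProduct_zero] at hn0
    exact (hn 0).not_ge (ge_of_tendsto' hn0 fun k => hmono k.zero_le)
  refine ⟨w', hw', hlim, squeeze_zero hL hLgeo ?_⟩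
  simpa using (tendsto_pow_atTop_nhds_zero_of_lt_one (sq_nonneg ρ) (by nlinarith)).mul_const (L 0)

section Dynamics

variable {ι : Type*} [Fintype ι] [DecidableEq ι] {H : Matrix ι ι ℝ} {u : ι → ℝ}

theorem exists_tendsto_of_effective_step_bounds (hH : H.PosDef) {w : ℕ → ι → ℝ} {η : ℕ → ℝ}
    {K εm εhp : ℝ} (hwk : ∀ k, w k ≠ 0)
    (hstep : ∀ k, w (k + 1) = w k + η k • H *ᵥ projResidual H u (w k))
    (hη : ∀ k, η k ^ 2 * (w k ⬝ᵥ H *ᵥ w k) ≤ K) (hεm : 0 < εm)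
    (hεhp : εhp < 2 / ⨆ i, hH.1.eigenvalues i)
    (hlo : ∀ k, εm / (w k ⬝ᵥ w k) ≤ projCoeff H u (w k) * η k)
    (hhi : ∀ k, projCoeff H u (w k) * η k ≤ εhp) :
    ∃ w', w' ≠ 0 ∧ projResidual H u w' = 0 ∧ Tendsto w atTop (𝓝 w') := by
  obtain ⟨i, -⟩ := Function.ne_iff.mp (hwk 0)
  obtain ⟨i₀, hlmin_le⟩ := @Finite.exists_min _ _ _ ⟨i⟩ _ hH.1.eigenvalues
  set lmin := hH.1.eigenvalues i₀
  set lmax := ⨆ i, hH.1.eigenvalues i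
  have hlmin : 0 < lmin := hH.eigenvalues_pos i₀
  have hle_lmax : ∀ i, hH.1.eigenvalues i ≤ lmax := le_ciSup (Set.finite_range _).bddAbove
  have hlmax : 0 < lmax := hlmin.trans_le (hle_lmax i₀)
  have hQ : ∀ k, w k ⬝ᵥ H *ᵥ w k ≠ 0 := fun k => (hH.dotProduct_mulVec_self_pos (hwk k)).ne'
  have hK : 0 ≤ K :=
    (mul_nonneg (sq_nonneg _) (hH.posSemidef.dotProduct_mulVec_self_nonneg _)).trans (hη 0)
  obtain ⟨w', hw', hlim, hL⟩ := exists_tendsto_of_growth_of_contraction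
    (L := fun k => projResidual H u (w k) ⬝ᵥ H *ᵥ projResidual H u (w k)) (C := K * lmax / lmin)
    (mul_pos hεm hlmin) (by positivity) (le_max_right (εhp * lmax - 1) 0)
    (max_lt (by linarith [(lt_div_iff₀ hlmax).mp hεhp]) one_pos) hwk
    (fun k => hH.posSemidef.dotProduct_mulVec_self_nonneg _)
    (fun k => by rw [hstep k, add_sub_cancel_left,
      dotProduct_self_add_smul_mulVec_projResidual (hQ k)])
    (fun k => by
      rw [hstep k, add_sub_cancel_left]
      exact smul_mulVec_dotProduct_self_le hH hlmin hlmin_le hle_lmax (hwk k) (hη k) _)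
    (fun k => by
      simp only [hstep k]
      exact dotProduct_mulVec_projResidual_add_smul_le_max hH.posSemidef (hstep k ▸ hQ (k + 1))
        hlmin.le hlmin_le hle_lmax hεm.le (hlo k) (hhi k))
  exact ⟨w', hw', projResidual_eq_zero_of_tendsto hH hlim hw' hL, hlim⟩

end Dynamics

theorem bngd_convergence_under_stepsize_bounds_general
    {d : ℕ}
    (H : Matrix (Fin d) (Fin d) ℝ) (hH : H.PosDef)
    (u : Fin d → ℝ) (hu : u ≠ 0)
    (εa ε : ℝ) (hεa : 0 < εa) (hεa2 : εa < 2)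
    (g : Fin d → ℝ) (hg : g = H.mulVec u)
    (σ : (Fin d → ℝ) → ℝ) (hσ : ∀ v, σ v = Real.sqrt (v ⬝ᵥ H.mulVec v))
    (a : ℕ → ℝ) (w : ℕ → Fin d → ℝ) (hwk : ∀ k, w k ≠ 0)
    (ha : ∀ k, a (k + 1) = a k + εa * ((w k ⬝ᵥ g) / σ (w k) - a k))
    (hw : ∀ k, w (k + 1) = w k +
      (ε * (a k / σ (w k))) • (g - ((w k ⬝ᵥ g) / (σ (w k)) ^ 2) • H.mulVec (w k)))
    (εhat : ℕ → ℝ)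
    (hεhat : ∀ k, εhat k = ε * (a k / σ (w k)) * ((w k ⬝ᵥ g) / (σ (w k)) ^ 2))
    (εm εhp : ℝ) (hεm : 0 < εm)
    (hεhpmax : εhp < 2 / (⨆ i, hH.1.eigenvalues i))
    (hbounds : ∀ k, εm / (w k ⬝ᵥ w k) ≤ εhat k ∧ εhat k ≤ εhp) :
    ∃ (astar : ℝ) (wstar : Fin d → ℝ) (c : ℝ), c ≠ 0 ∧ wstar = c • u ∧
      astar = (wstar ⬝ᵥ g) / σ wstar ∧ astar ^ 2 = u ⬝ᵥ H.mulVec u ∧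
      Tendsto a atTop (nhds astar) ∧ Tendsto w atTop (nhds wstar) := by
  subst hg
  obtain rfl : σ = fun v => √(v ⬝ᵥ H *ᵥ v) := funext hσ
  have hQ : ∀ k, w k ⬝ᵥ H *ᵥ w k ≠ 0 := fun k => (hH.dotProduct_mulVec_self_pos (hwk k)).ne'
  have hsq : ∀ k, √(w k ⬝ᵥ H *ᵥ w k) ^ 2 = w k ⬝ᵥ H *ᵥ w k :=
    fun k => Real.sq_sqrt (hH.posSemidef.dotProduct_mulVec_self_nonneg _)
  have hc : |1 - εa| < 1 := abs_lt.mpr ⟨by linarith, by linarith⟩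
  have hrec : ∀ k, a (k + 1) = (1 - εa) * a k + εa * (w k ⬝ᵥ H *ᵥ u / √(w k ⬝ᵥ H *ᵥ w k)) :=
    fun k => by rw [ha]; ring
  obtain ⟨A, hA⟩ := exists_abs_le_of_affine_rec hc hrec fun k => by
    rw [abs_mul, abs_of_pos hεa]
    exact mul_le_mul_of_nonneg_left (abs_div_sqrt_le_sqrt hH.posSemidef (hQ k)) hεa.le
  have hη : ∀ k, (ε * (a k / √(w k ⬝ᵥ H *ᵥ w k))) ^ 2 * (w k ⬝ᵥ H *ᵥ w k) ≤ ε ^ 2 * A ^ 2 :=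
    fun k => by
      rw [mul_pow, div_pow, hsq k, mul_assoc, div_mul_cancel₀ _ (hQ k)]
      exact mul_le_mul_of_nonneg_left (sq_le_sq' (abs_le.mp (hA k)).1 (abs_le.mp (hA k)).2)
        (sq_nonneg ε)
  have hstep : ∀ k, w (k + 1) =
      w k + (ε * (a k / √(w k ⬝ᵥ H *ᵥ w k))) • H *ᵥ projResidual H u (w k) := fun k => by
    rw [hw k, hsq k]
    simp only [projResidual, projCoeff, mulVec_sub, mulVec_smul]
  have hεhat' : ∀ k, εhat k = projCoeff H u (w k) * (ε * (a k / √(w k ⬝ᵥ H *ᵥ w k))) :=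
    fun k => by rw [hεhat k, hsq k, projCoeff]; ring
  obtain ⟨w', hw', hr, hlim⟩ := exists_tendsto_of_effective_step_bounds hH hwk hstep hη hεm
    hεhpmax (fun k => hεhat' k ▸ (hbounds k).1) (fun k => hεhat' k ▸ (hbounds k).2)
  obtain ⟨c, hc0, rfl⟩ := exists_eq_smul_of_projResidual_eq_zero hu hr
  refine ⟨_, c • u, c, hc0, rfl, rfl, div_sqrt_sq_eq_of_projResidual_eq_zero hH.posSemidef
    (hH.dotProduct_mulVec_self_pos hw').ne' hr, tendsto_of_affine_rec hc hrec ?_, hlim⟩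
  simpa using ((continuousAt_dotProduct_mulVec_div_sqrt hH hw').tendsto.comp hlim).const_mul εa

/-- Convergence of BNGD under effective step size bounds: if `0 < ε_a < 2` and
`ε⁻/‖w_k‖² ≤ ε̂_k ≤ ε̂⁺ < 2/λ_max` for all `k`, then `(a_k, w_k)` converges to a global
minimizer `(a*, w*)` of the BN-OLS objective: `w*` is a nonzero multiple of `u`,
`a* = w*ᵀg/σ(w*)` and `a*² = uᵀHu`. -/
theorem bngd_convergence_under_stepsize_bounds
    {d : ℕ} (hd : 0 < d)
    (H : Matrix (Fin d) (Fin d) ℝ) (hH : H.PosDef)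
    (u : Fin d → ℝ) (hu : u ≠ 0)
    (εa ε : ℝ) (hεa : 0 < εa) (hεa2 : εa < 2) (hε : 0 < ε)
    (g : Fin d → ℝ) (hg : g = H.mulVec u)
    (σ : (Fin d → ℝ) → ℝ) (hσ : ∀ v, σ v = Real.sqrt (v ⬝ᵥ H.mulVec v))
    (a : ℕ → ℝ) (w : ℕ → Fin d → ℝ) (hw0 : w 0 ≠ 0) (hwk : ∀ k, w k ≠ 0)
    (ha : ∀ k, a (k + 1) = a k + εa * ((w k ⬝ᵥ g) / σ (w k) - a k))
    (hw : ∀ k, w (k + 1) = w k +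
      (ε * (a k / σ (w k))) • (g - ((w k ⬝ᵥ g) / (σ (w k)) ^ 2) • H.mulVec (w k)))
    (εhat : ℕ → ℝ)
    (hεhat : ∀ k, εhat k = ε * (a k / σ (w k)) * ((w k ⬝ᵥ g) / (σ (w k)) ^ 2))
    (εm εhp : ℝ) (hεm : 0 < εm) (hεhp : 0 < εhp)
    (hεhpmax : εhp < 2 / (⨆ i, hH.1.eigenvalues i))
    (hbounds : ∀ k, εm / (w k ⬝ᵥ w k) ≤ εhat k ∧ εhat k ≤ εhp) :
    ∃ (astar : ℝ) (wstar : Fin d → ℝ) (c : ℝ), c ≠ 0 ∧ wstar = c • u ∧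
      astar = (wstar ⬝ᵥ g) / σ wstar ∧ astar ^ 2 = u ⬝ᵥ H.mulVec u ∧
      Tendsto a atTop (nhds astar) ∧ Tendsto w atTop (nhds wstar) :=
  bngd_convergence_under_stepsize_bounds_general H hH u hu εa ε hεa hεa2 g hg σ hσ a w hwk ha hw
    εhat hεhat εm εhp hεm hεhpmax hbounds
end
end

section
/- One-step contraction with the reduced matrix H*: For every k with w_k ≠ 0 and w_{k+1} ≠ 0, the BNGD iterates satisfy (1 − δ_k)·‖e_{k+1}‖_H ≤ (ρ*(I − ε̂_k H*) + δ_k)·‖e_k‖_H, where e_k := u − (w_kᵀg/σ(w_k)²)w_k, ε̂_k := ε(a_k/σ(w_k))(w_kᵀg/σ(w_k)²), δ_k := λ_max·ε·|a_k|·‖e_k‖_H/σ(w_k)², H* := H − (H u uᵀ H)/(uᵀHu), and ρ*(I − t H*) := max over the nonzero eigenvalues λ of H* of |1 − t·λ| (equivalently, max_{2 ≤ i ≤ d} |1 − t·λ_i(H*)| where λ_i(H*) are the eigenvalues of H* in increasing order). -/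
/-!
Let `P` be the `H`-orthogonal projection onto `{x | uᵀHx = 0}` and `e(w) = u − (wᵀHu/‖w‖²_H) w`.
The Lagrange identity `‖u‖_H ‖P w‖_H = ‖w‖_H ‖e(w)‖_H` turns the residual into a projection.
Since `w_{k+1} = w_k + τ H e_k` with `τ = ε a_k / σ(w_k)`, one step gives
`P w_{k+1} = (I − ε̂_k P H) P w_k + γ P g` with `γ ‖u‖²_H = τ ‖e_k‖²_H`. On `{uᵀHx = 0}` the map
`P H` is conjugate, through `√H`, to a symmetric matrix whose nonzero spectrum is that of `H*`, so
the first term shrinks by `ρ*(I − ε̂_k H*)`; the second is at most `λ_max |τ| ‖e_k‖²_H / ‖u‖_H`.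
Multiplying by `‖u‖_H` and using `σ(w_{k+1}) ≥ (1 − δ_k) σ(w_k)` (triangle inequality) gives the
bound.
-/

open Matrix WithLp
open scoped RealInnerProductSpace MatrixOrder

noncomputable section

theorem OrthonormalBasis.norm_le_mul_norm_of_abs_inner_le {ι E : Type*} [Fintype ι]
    [NormedAddCommGroup E] [InnerProductSpace ℝ E] (b : OrthonormalBasis ι ℝ E) {x y : E}
    {C : ℝ} (hC : 0 ≤ C) (h : ∀ i, |⟪b i, y⟫| ≤ C * |⟪b i, x⟫|) : ‖y‖ ≤ C * ‖x‖ := by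
  refine le_of_sq_le_sq ?_ (by positivity)
  rw [mul_pow, ← b.sum_sq_inner_right, ← b.sum_sq_inner_right, Finset.mul_sum]
  gcongr with i
  rw [← sq_abs, ← sq_abs ⟪b i, x⟫, ← mul_pow]
  exact pow_le_pow_left₀ (abs_nonneg _) (h i) 2

namespace Matrix

theorem dotProduct_mulVec_eq_zero_of_mul_transpose_mulVec_eq_zero {m n : Type*} [Fintype m]
    [Fintype n] {A : Matrix m n ℝ} {y : m → ℝ} (hy : (A * Aᵀ) *ᵥ y = 0) (z : n → ℝ) :
    y ⬝ᵥ A *ᵥ z = 0 := by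
  have hAy : Aᵀ *ᵥ y = 0 := by
    rw [← dotProduct_self_eq_zero, dotProduct_transpose_mulVec, mulVec_mulVec, hy,
      dotProduct_zero]
  rw [← dotProduct_transpose_mulVec, hAy, dotProduct_zero]

theorem IsHermitian.transpose_eq {n : Type*} {M : Matrix n n ℝ} (hM : M.IsHermitian) : Mᵀ = M :=
  (isHermitian_iff_isSymm.mp hM).eq

theorem IsHermitian.dotProduct_mulVec_comm_s11 {n : Type*} [Fintype n] {M : Matrix n n ℝ}
    (hM : M.IsHermitian) (x y : n → ℝ) : x ⬝ᵥ M *ᵥ y = y ⬝ᵥ M *ᵥ x := by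
  rw [← dotProduct_transpose_mulVec, hM.transpose_eq]

namespace IsHermitian

variable {n : Type*} [Fintype n] [DecidableEq n] {M : Matrix n n ℝ}

theorem inner_eigenvectorBasis_toLp_mulVec (hM : M.IsHermitian) (i : n) (x : n → ℝ) :
    ⟪hM.eigenvectorBasis i, toLp 2 (M *ᵥ x)⟫ =
      hM.eigenvalues i * ⟪hM.eigenvectorBasis i, toLp 2 x⟫ := by
  simp only [EuclideanSpace.inner_eq_star_dotProduct, star_trivial]
  rw [dotProduct_comm, ← dotProduct_transpose_mulVec, hM.transpose_eq, hM.mulVec_eigenvectorBasis,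
    dotProduct_smul, smul_eq_mul]

theorem norm_toLp_mulVec_le (hM : M.IsHermitian) {C : ℝ} (hC : 0 ≤ C)
    (h : ∀ i, |hM.eigenvalues i| ≤ C) (x : n → ℝ) :
    ‖toLp 2 (M *ᵥ x)‖ ≤ C * ‖toLp 2 x‖ :=
  hM.eigenvectorBasis.norm_le_mul_norm_of_abs_inner_le hC fun i => by
    rw [inner_eigenvectorBasis_toLp_mulVec, abs_mul]
    gcongr
    exact h i

theorem norm_toLp_sub_smul_mulVec_le (hM : M.IsHermitian) {t C : ℝ} (hC : 0 ≤ C)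
    (h : ∀ i, hM.eigenvalues i ≠ 0 → |1 - t * hM.eigenvalues i| ≤ C) {x : n → ℝ}
    (hx : ∀ y, M *ᵥ y = 0 → y ⬝ᵥ x = 0) :
    ‖toLp 2 (x - t • M *ᵥ x)‖ ≤ C * ‖toLp 2 x‖ := by
  refine hM.eigenvectorBasis.norm_le_mul_norm_of_abs_inner_le hC fun i => ?_
  rw [toLp_sub, toLp_smul, inner_sub_right, inner_smul_right, inner_eigenvectorBasis_toLp_mulVec,
    ← mul_assoc, ← one_sub_mul, abs_mul]
  by_cases hi : hM.eigenvalues i = 0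
  · have hker : ⟪hM.eigenvectorBasis i, toLp 2 x⟫ = 0 := by
      rw [EuclideanSpace.inner_eq_star_dotProduct, star_trivial, ofLp_toLp, dotProduct_comm]
      exact hx _ (by rw [hM.mulVec_eigenvectorBasis, hi, zero_smul])
    simp [hker]
  · gcongr
    exact h i hi

/-- The paper's `ρ*(I − tM)`; it is `0` (junk) when `M = 0`. -/
def rhoStar (hM : M.IsHermitian) (t : ℝ) : ℝ :=
  ⨆ i : {j // hM.eigenvalues j ≠ 0}, |1 - t * hM.eigenvalues i.1|

theorem rhoStar_nonneg (hM : M.IsHermitian) (t : ℝ) : 0 ≤ hM.rhoStar t :=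
  Real.iSup_nonneg fun _ => abs_nonneg _

theorem abs_one_sub_mul_eigenvalues_le_rhoStar (hM : M.IsHermitian) (t : ℝ) {i : n}
    (hi : hM.eigenvalues i ≠ 0) : |1 - t * hM.eigenvalues i| ≤ hM.rhoStar t :=
  le_ciSup (f := fun j : {j // hM.eigenvalues j ≠ 0} => |1 - t * hM.eigenvalues j.1|)
    (Set.finite_range _).bddAbove ⟨i, hi⟩

theorem eigenvalues_mem_range_of_mul_comm {A B : Matrix n n ℝ} (hAB : (A * B).IsHermitian)
    (hBA : (B * A).IsHermitian) {i : n} (hi : hAB.eigenvalues i ≠ 0) :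
    hAB.eigenvalues i ∈ Set.range hBA.eigenvalues := by
  have h : hAB.eigenvalues i ∈ spectrum ℝ (A * B) \ {0} :=
    ⟨hAB.eigenvalues_mem_spectrum_real i, hi⟩
  rw [spectrum.nonzero_mul_comm, hBA.spectrum_real_eq_range_eigenvalues] at h
  exact h.1

end IsHermitian

section EnergyNorm

variable {n : Type*} [Fintype n]

def energyNorm (H : Matrix n n ℝ) (x : n → ℝ) : ℝ := √(x ⬝ᵥ H *ᵥ x)

variable {H : Matrix n n ℝ}

theorem energyNorm_nonneg (H : Matrix n n ℝ) (x : n → ℝ) : 0 ≤ energyNorm H x :=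
  Real.sqrt_nonneg _

theorem PosSemidef.energyNorm_sq (hH : H.PosSemidef) (x : n → ℝ) :
    energyNorm H x ^ 2 = x ⬝ᵥ H *ᵥ x :=
  Real.sq_sqrt (by simpa using hH.dotProduct_mulVec_nonneg x)

theorem PosDef.energyNorm_pos (hH : H.PosDef) {x : n → ℝ} (hx : x ≠ 0) : 0 < energyNorm H x :=
  Real.sqrt_pos.mpr (by simpa using hH.dotProduct_mulVec_pos hx)

theorem PosSemidef.energyNorm_sub_smul_sq (hH : H.PosSemidef) (x y : n → ℝ) (r : ℝ) :
    energyNorm H (x - r • y) ^ 2 =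
      energyNorm H x ^ 2 - 2 * r * (y ⬝ᵥ H *ᵥ x) + r ^ 2 * energyNorm H y ^ 2 := by
  simp only [hH.energyNorm_sq, mulVec_sub, mulVec_smul, sub_dotProduct, dotProduct_sub,
    smul_dotProduct, dotProduct_smul, smul_eq_mul]
  rw [← dotProduct_transpose_mulVec H y x, hH.1.transpose_eq]
  ring

def energyResidual (H : Matrix n n ℝ) (u w : n → ℝ) : n → ℝ :=
  u - ((w ⬝ᵥ H *ᵥ u) / energyNorm H w ^ 2) • w

theorem PosSemidef.energyNorm_energyResidual_sq (hH : H.PosSemidef) (u : n → ℝ) {w : n → ℝ}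
    (hw : energyNorm H w ≠ 0) :
    energyNorm H (energyResidual H u w) ^ 2 =
      energyNorm H u ^ 2 - (w ⬝ᵥ H *ᵥ u) ^ 2 / energyNorm H w ^ 2 := by
  rw [energyResidual, hH.energyNorm_sub_smul_sq]
  field_simp
  ring

variable [DecidableEq n]

theorem transpose_cfcSqrt (H : Matrix n n ℝ) : (CFC.sqrt H)ᵀ = CFC.sqrt H :=
  (CFC.sqrt_nonneg H).posSemidef.1.transpose_eq

theorem PosSemidef.cfcSqrt_mulVec_dotProduct (hH : H.PosSemidef) (x y : n → ℝ) :
    CFC.sqrt H *ᵥ x ⬝ᵥ CFC.sqrt H *ᵥ y = x ⬝ᵥ H *ᵥ y := by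
  rw [dotProduct_comm, ← dotProduct_transpose_mulVec, transpose_cfcSqrt, mulVec_mulVec,
    CFC.sqrt_mul_sqrt_self H hH.nonneg]

theorem PosSemidef.energyNorm_eq_norm_toLp (hH : H.PosSemidef) (x : n → ℝ) :
    energyNorm H x = ‖toLp 2 (CFC.sqrt H *ᵥ x)‖ := by
  rw [norm_eq_sqrt_real_inner, EuclideanSpace.inner_toLp_toLp, star_trivial,
    hH.cfcSqrt_mulVec_dotProduct, energyNorm]

theorem PosSemidef.energyNorm_add_le (hH : H.PosSemidef) (x y : n → ℝ) :
    energyNorm H (x + y) ≤ energyNorm H x + energyNorm H y := by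
  simpa only [hH.energyNorm_eq_norm_toLp, mulVec_add, toLp_add] using norm_add_le _ _

theorem PosSemidef.energyNorm_smul (hH : H.PosSemidef) (r : ℝ) (x : n → ℝ) :
    energyNorm H (r • x) = |r| * energyNorm H x := by
  rw [hH.energyNorm_eq_norm_toLp, hH.energyNorm_eq_norm_toLp, mulVec_smul, toLp_smul, norm_smul,
    Real.norm_eq_abs]

theorem PosSemidef.energyNorm_mulVec_le (hH : H.PosSemidef) (x : n → ℝ) :
    energyNorm H (H *ᵥ x) ≤ (⨆ i, hH.1.eigenvalues i) * energyNorm H x := by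
  have hcomm : Commute (CFC.sqrt H) H := by
    simpa only [CFC.sqrt_mul_sqrt_self H hH.nonneg] using
      (Commute.refl (CFC.sqrt H)).mul_right (Commute.refl (CFC.sqrt H))
  have hbdd : BddAbove (Set.range hH.1.eigenvalues) := (Set.finite_range _).bddAbove
  rw [hH.energyNorm_eq_norm_toLp, hH.energyNorm_eq_norm_toLp, mulVec_mulVec, hcomm.eq,
    ← mulVec_mulVec]
  refine hH.1.norm_toLp_mulVec_le (Real.iSup_nonneg hH.eigenvalues_nonneg) (fun i => ?_) _
  rw [abs_of_nonneg (hH.eigenvalues_nonneg i)]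
  exact le_ciSup hbdd i

theorem PosSemidef.sub_le_energyNorm_add_smul_mulVec (hH : H.PosSemidef) (w e : n → ℝ) (τ : ℝ) :
    energyNorm H w - |τ| * (⨆ i, hH.1.eigenvalues i) * energyNorm H e ≤
      energyNorm H (w + τ • H *ᵥ e) := by
  have h := hH.energyNorm_add_le (w + τ • H *ᵥ e) (-τ • H *ᵥ e)
  rw [show w + τ • H *ᵥ e + -τ • H *ᵥ e = w by module, hH.energyNorm_smul, abs_neg] at h
  have := mul_le_mul_of_nonneg_left (hH.energyNorm_mulVec_le e) (abs_nonneg τ)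
  linarith

end EnergyNorm

section EnergyProjection

variable {n : Type*} [Fintype n] [DecidableEq n] {H : Matrix n n ℝ} {u : n → ℝ}

def energyOrthProj (H : Matrix n n ℝ) (u : n → ℝ) : Matrix n n ℝ :=
  1 - (u ⬝ᵥ H *ᵥ u)⁻¹ • vecMulVec u (u ᵥ* H)

theorem energyOrthProj_mulVec (H : Matrix n n ℝ) (u x : n → ℝ) :
    energyOrthProj H u *ᵥ x = x - ((u ⬝ᵥ H *ᵥ u)⁻¹ * (u ⬝ᵥ H *ᵥ x)) • u := by
  rw [energyOrthProj, sub_mulVec, one_mulVec, smul_mulVec, vecMulVec_mulVec, ← dotProduct_mulVec,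
    op_smul_eq_smul, smul_smul]

theorem energyOrthProj_mul_self (hu : u ⬝ᵥ H *ᵥ u ≠ 0) :
    energyOrthProj H u * energyOrthProj H u = energyOrthProj H u := by
  have hVV : vecMulVec u (u ᵥ* H) * vecMulVec u (u ᵥ* H) =
      (u ⬝ᵥ H *ᵥ u) • vecMulVec u (u ᵥ* H) := by
    rw [vecMulVec_mul_vecMulVec, ← dotProduct_mulVec, vecMulVec_smul]
  simp only [energyOrthProj, sub_mul, mul_sub, one_mul, mul_one, Matrix.smul_mul,
    Matrix.mul_smul, hVV, smul_smul, inv_mul_cancel₀ hu]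
  abel

theorem energyOrthProj_one_transpose (v : n → ℝ) :
    (energyOrthProj 1 v)ᵀ = energyOrthProj 1 v := by
  rw [energyOrthProj, vecMul_one, transpose_sub, transpose_one, transpose_smul,
    transpose_vecMulVec]

theorem IsHermitian.mul_energyOrthProj (hH : H.IsHermitian) (u : n → ℝ) :
    H * energyOrthProj H u = H - (u ⬝ᵥ H *ᵥ u)⁻¹ • vecMulVec (H *ᵥ u) (H *ᵥ u) := by
  rw [energyOrthProj, mul_sub, mul_one, Matrix.mul_smul, mul_vecMulVec, ← mulVec_transpose,
    hH.transpose_eq]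

theorem PosSemidef.cfcSqrt_mul_energyOrthProj (hH : H.PosSemidef) (u : n → ℝ) :
    CFC.sqrt H * energyOrthProj H u =
      energyOrthProj 1 (CFC.sqrt H *ᵥ u) * CFC.sqrt H := by
  rw [energyOrthProj, energyOrthProj, one_mulVec, vecMul_one, hH.cfcSqrt_mulVec_dotProduct,
    mul_sub, sub_mul, mul_one, one_mul, Matrix.mul_smul, Matrix.smul_mul, mul_vecMulVec,
    vecMulVec_mul, ← mulVec_transpose, ← mulVec_transpose, transpose_cfcSqrt, hH.1.transpose_eq,
    mulVec_mulVec, CFC.sqrt_mul_sqrt_self H hH.nonneg]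

theorem dotProduct_mulVec_energyOrthProj_mulVec (hu : u ⬝ᵥ H *ᵥ u ≠ 0) (x : n → ℝ) :
    u ⬝ᵥ H *ᵥ (energyOrthProj H u *ᵥ x) = 0 := by
  rw [energyOrthProj_mulVec, mulVec_sub, mulVec_smul, dotProduct_sub, dotProduct_smul, smul_eq_mul,
    mul_right_comm, inv_mul_cancel₀ hu, one_mul, sub_self]

theorem energyOrthProj_mulVec_add_smul_mulVec_sub_smul (H : Matrix n n ℝ) (u w : n → ℝ)
    (τ c : ℝ) :
    energyOrthProj H u *ᵥ (w + τ • H *ᵥ (u - c • w)) =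
      (energyOrthProj H u *ᵥ w -
          (τ * c) • energyOrthProj H u *ᵥ (H *ᵥ (energyOrthProj H u *ᵥ w))) +
        (τ * (1 - c * ((u ⬝ᵥ H *ᵥ u)⁻¹ * (u ⬝ᵥ H *ᵥ w)))) • energyOrthProj H u *ᵥ (H *ᵥ u) := by
  have hHPw : H *ᵥ (energyOrthProj H u *ᵥ w) =
      H *ᵥ w - ((u ⬝ᵥ H *ᵥ u)⁻¹ * (u ⬝ᵥ H *ᵥ w)) • H *ᵥ u := by
    rw [energyOrthProj_mulVec, mulVec_sub, mulVec_smul]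
  rw [hHPw]
  simp only [mulVec_add, mulVec_sub, mulVec_smul]
  module

theorem PosSemidef.energyNorm_energyOrthProj_mulVec_sq (hH : H.PosSemidef)
    (hu : energyNorm H u ≠ 0) (x : n → ℝ) :
    energyNorm H (energyOrthProj H u *ᵥ x) ^ 2 =
      energyNorm H x ^ 2 - (u ⬝ᵥ H *ᵥ x) ^ 2 / energyNorm H u ^ 2 := by
  rw [energyOrthProj_mulVec, hH.energyNorm_sub_smul_sq, ← hH.energyNorm_sq u]
  field_simp
  ring

theorem PosSemidef.energyNorm_energyOrthProj_mulVec_le (hH : H.PosSemidef)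
    (hu : energyNorm H u ≠ 0) (x : n → ℝ) :
    energyNorm H (energyOrthProj H u *ᵥ x) ≤ energyNorm H x := by
  refine le_of_sq_le_sq ?_ (energyNorm_nonneg H x)
  rw [hH.energyNorm_energyOrthProj_mulVec_sq hu]
  have : 0 ≤ (u ⬝ᵥ H *ᵥ x) ^ 2 / energyNorm H u ^ 2 := by positivity
  linarith

theorem PosSemidef.energyNorm_mul_energyNorm_energyOrthProj_mulVec (hH : H.PosSemidef)
    (hu : energyNorm H u ≠ 0) {x : n → ℝ} (hx : energyNorm H x ≠ 0) :
    energyNorm H u * energyNorm H (energyOrthProj H u *ᵥ x) =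
      energyNorm H x * energyNorm H (energyResidual H u x) := by
  rw [← pow_left_inj₀ (mul_nonneg (energyNorm_nonneg _ _) (energyNorm_nonneg _ _))
    (mul_nonneg (energyNorm_nonneg _ _) (energyNorm_nonneg _ _)) two_ne_zero, mul_pow, mul_pow,
    hH.energyNorm_energyOrthProj_mulVec_sq hu, hH.energyNorm_energyResidual_sq u hx,
    hH.1.dotProduct_mulVec_comm_s11 x u]
  field_simp

theorem PosSemidef.energyNorm_sub_smul_energyOrthProj_mulVec_le (hH : H.PosSemidef)
    (hu : energyNorm H u ≠ 0) {Hs : Matrix n n ℝ} (hHs : Hs.IsHermitian)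
    (hHsdef : Hs = H - (u ⬝ᵥ H *ᵥ u)⁻¹ • vecMulVec (H *ᵥ u) (H *ᵥ u)) (t : ℝ) {z : n → ℝ}
    (hz : u ⬝ᵥ H *ᵥ z = 0) :
    energyNorm H (z - t • energyOrthProj H u *ᵥ (H *ᵥ z)) ≤ hHs.rhoStar t * energyNorm H z := by
  -- With `S = √H` and `Q` the Euclidean projection away from `S u`, `A = Q * S` satisfies
  -- `S (P (H z)) = A Aᵀ (S z)` and `S z = A z`, while `Aᵀ A = Hs`: so the nonzero eigenvalues
  -- of `A Aᵀ` are those of `Hs`, and `S z` is orthogonal to the kernel of `A Aᵀ`.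
  rw [hH.energyNorm_eq_norm_toLp, hH.energyNorm_eq_norm_toLp]
  have hSS : CFC.sqrt H * CFC.sqrt H = H := CFC.sqrt_mul_sqrt_self H hH.nonneg
  have hSt := transpose_cfcSqrt H
  have hSu := hH.cfcSqrt_mulVec_dotProduct u
  have hSP := hH.cfcSqrt_mul_energyOrthProj u
  generalize CFC.sqrt H = S at hSS hSt hSu hSP ⊢
  set Q := energyOrthProj 1 (S *ᵥ u)
  have hQQ : Q * Q = Q :=
    energyOrthProj_mul_self (by rw [one_mulVec, hSu, ← hH.energyNorm_sq]; exact pow_ne_zero 2 hu)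
  have hHs' : Hs = (Q * S)ᵀ * (Q * S) := by
    rw [hHsdef, ← hH.1.mul_energyOrthProj, transpose_mul, hSt, energyOrthProj_one_transpose,
      Matrix.mul_assoc, ← Matrix.mul_assoc Q, hQQ, ← hSP, ← Matrix.mul_assoc, hSS]
  have hQSz : (Q * S) *ᵥ z = S *ᵥ z := by
    rw [← mulVec_mulVec, energyOrthProj_mulVec, one_mulVec, one_mulVec, hSu, hSu, hz, mul_zero,
      zero_smul, sub_zero]
  have hHsz : Hs *ᵥ z = H *ᵥ z := by
    rw [hHsdef, sub_mulVec, smul_mulVec, vecMulVec_mulVec, dotProduct_comm (H *ᵥ u),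
      hH.1.dotProduct_mulVec_comm_s11 z u, hz, MulOpposite.op_zero, zero_smul, smul_zero, sub_zero]
  have hkey : S *ᵥ (energyOrthProj H u *ᵥ (H *ᵥ z)) =
      ((Q * S) * (Q * S)ᵀ) *ᵥ ((Q * S) *ᵥ z) := by
    calc S *ᵥ (energyOrthProj H u *ᵥ (H *ᵥ z)) = (Q * S) *ᵥ (Hs *ᵥ z) := by
          rw [mulVec_mulVec, hSP, hHsz]
      _ = ((Q * S) * (Q * S)ᵀ) *ᵥ ((Q * S) *ᵥ z) := by
          simp only [hHs', mulVec_mulVec, Matrix.mul_assoc]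
  subst hHs'
  rw [mulVec_sub, mulVec_smul, hkey, hQSz, ← hQSz]
  have hG : (Q * S * (Q * S)ᵀ).IsHermitian :=
    isHermitian_iff_isSymm.mpr (isSymm_mul_transpose_self _)
  refine hG.norm_toLp_sub_smul_mulVec_le (hHs.rhoStar_nonneg t) (fun i hi => ?_)
    (fun y hy => dotProduct_mulVec_eq_zero_of_mul_transpose_mulVec_eq_zero hy z)
  obtain ⟨j, hj⟩ := IsHermitian.eigenvalues_mem_range_of_mul_comm _ hHs hi
  rw [← hj]
  exact hHs.abs_one_sub_mul_eigenvalues_le_rhoStar t (hj ▸ hi)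

theorem PosSemidef.energyNorm_energyOrthProj_mulVec_add_smul_le (hH : H.PosSemidef)
    (hu : energyNorm H u ≠ 0) {Hs : Matrix n n ℝ} (hHs : Hs.IsHermitian)
    (hHsdef : Hs = H - (u ⬝ᵥ H *ᵥ u)⁻¹ • vecMulVec (H *ᵥ u) (H *ᵥ u)) (w : n → ℝ) (τ c : ℝ) :
    energyNorm H (energyOrthProj H u *ᵥ (w + τ • H *ᵥ (u - c • w))) ≤
      hHs.rhoStar (τ * c) * energyNorm H (energyOrthProj H u *ᵥ w) +
        |τ * (1 - c * ((u ⬝ᵥ H *ᵥ u)⁻¹ * (u ⬝ᵥ H *ᵥ w)))| *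
          ((⨆ i, hH.1.eigenvalues i) * energyNorm H u) := by
  have hβ : u ⬝ᵥ H *ᵥ u ≠ 0 := hH.energyNorm_sq u ▸ pow_ne_zero 2 hu
  rw [energyOrthProj_mulVec_add_smul_mulVec_sub_smul]
  refine (hH.energyNorm_add_le _ _).trans (add_le_add ?_ ?_)
  · exact hH.energyNorm_sub_smul_energyOrthProj_mulVec_le hu hHs hHsdef _
      (dotProduct_mulVec_energyOrthProj_mulVec hβ w)
  · rw [hH.energyNorm_smul]
    gcongr
    exact (hH.energyNorm_energyOrthProj_mulVec_le hu _).trans (hH.energyNorm_mulVec_le u)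

theorem PosSemidef.energyNorm_mul_energyNorm_energyResidual_add_smul_le (hH : H.PosSemidef)
    (hu : energyNorm H u ≠ 0) {Hs : Matrix n n ℝ} (hHs : Hs.IsHermitian)
    (hHsdef : Hs = H - (u ⬝ᵥ H *ᵥ u)⁻¹ • vecMulVec (H *ᵥ u) (H *ᵥ u)) {w : n → ℝ}
    (hw : energyNorm H w ≠ 0) (τ : ℝ) :
    energyNorm H (w + τ • H *ᵥ energyResidual H u w) *
        energyNorm H (energyResidual H u (w + τ • H *ᵥ energyResidual H u w)) ≤
      hHs.rhoStar (τ * ((w ⬝ᵥ H *ᵥ u) / energyNorm H w ^ 2)) * energyNorm H w *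
          energyNorm H (energyResidual H u w) +
        |τ| * (⨆ i, hH.1.eigenvalues i) * energyNorm H (energyResidual H u w) ^ 2 := by
  set c := (w ⬝ᵥ H *ᵥ u) / energyNorm H w ^ 2 with hc
  set e := energyResidual H u w
  set γ := τ * (1 - c * ((u ⬝ᵥ H *ᵥ u)⁻¹ * (u ⬝ᵥ H *ᵥ w))) with hγdef
  set w' := w + τ • H *ᵥ e
  set L := ⨆ i, hH.1.eigenvalues i
  have hγ : γ * energyNorm H u ^ 2 = τ * energyNorm H e ^ 2 := by
    have hβ : u ⬝ᵥ H *ᵥ u ≠ 0 := hH.energyNorm_sq u ▸ pow_ne_zero 2 hu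
    rw [hH.energyNorm_energyResidual_sq u hw, hH.energyNorm_sq u, hγdef, hc,
      hH.1.dotProduct_mulVec_comm_s11 u w]
    field_simp
  rcases eq_or_ne (energyNorm H w') 0 with hw' | hw'
  · rw [hw', zero_mul]
    have hL : 0 ≤ L := Real.iSup_nonneg hH.eigenvalues_nonneg
    exact add_nonneg
      (mul_nonneg (mul_nonneg (hHs.rhoStar_nonneg _) (energyNorm_nonneg H w))
        (energyNorm_nonneg H e))
      (mul_nonneg (mul_nonneg (abs_nonneg τ) hL) (sq_nonneg _))
  calc energyNorm H w' * energyNorm H (energyResidual H u w')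
      = energyNorm H u * energyNorm H (energyOrthProj H u *ᵥ w') :=
        (hH.energyNorm_mul_energyNorm_energyOrthProj_mulVec hu hw').symm
    _ ≤ energyNorm H u * (hHs.rhoStar (τ * c) * energyNorm H (energyOrthProj H u *ᵥ w) +
          |γ| * (L * energyNorm H u)) := by
        gcongr
        · exact energyNorm_nonneg H u
        · exact hH.energyNorm_energyOrthProj_mulVec_add_smul_le hu hHs hHsdef w τ c
    _ = hHs.rhoStar (τ * c) * (energyNorm H u * energyNorm H (energyOrthProj H u *ᵥ w)) +
          L * (|γ| * energyNorm H u ^ 2) := by ring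
    _ = hHs.rhoStar (τ * c) * energyNorm H w * energyNorm H e +
          |τ| * L * energyNorm H e ^ 2 := by
        rw [hH.energyNorm_mul_energyNorm_energyOrthProj_mulVec hu hw, ← abs_sq, ← abs_mul, hγ,
          abs_mul, abs_sq]
        ring

end EnergyProjection

end Matrix

theorem bngd_one_step_contraction_Hstar_general
    {d : ℕ}
    (H : Matrix (Fin d) (Fin d) ℝ) (hH : H.PosDef)
    (u : Fin d → ℝ) (hu : u ≠ 0)
    (ε : ℝ) (hε : 0 < ε)
    (g : Fin d → ℝ) (hg : g = H.mulVec u)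
    (σ : (Fin d → ℝ) → ℝ) (hσ : ∀ v, σ v = Real.sqrt (v ⬝ᵥ H.mulVec v))
    (normH : (Fin d → ℝ) → ℝ) (hnormH : ∀ x, normH x = Real.sqrt (x ⬝ᵥ H.mulVec x))
    (a : ℕ → ℝ) (w : ℕ → Fin d → ℝ)
    (hw : ∀ k, w (k + 1) = w k +
      (ε * (a k / σ (w k))) • (g - ((w k ⬝ᵥ g) / (σ (w k)) ^ 2) • H.mulVec (w k)))
    (e : ℕ → Fin d → ℝ)
    (he : ∀ k, e k = u - ((w k ⬝ᵥ g) / (σ (w k)) ^ 2) • w k)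
    (εhat : ℕ → ℝ)
    (hεhat : ∀ k, εhat k = ε * (a k / σ (w k)) * ((w k ⬝ᵥ g) / (σ (w k)) ^ 2))
    (δ : ℕ → ℝ)
    (hδ : ∀ k, δ k = (⨆ i, hH.1.eigenvalues i) * ε * |a k| * normH (e k) / (σ (w k)) ^ 2)
    (Hs : Matrix (Fin d) (Fin d) ℝ)
    (hHsdef : Hs = H - (u ⬝ᵥ H.mulVec u)⁻¹ • vecMulVec (H.mulVec u) (H.mulVec u))
    (hHs : Hs.IsHermitian) :
    ∀ k, w k ≠ 0 → w (k + 1) ≠ 0 →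
      (1 - δ k) * normH (e (k + 1)) ≤
        ((⨆ i : {j : Fin d // hHs.eigenvalues j ≠ 0}, |1 - εhat k * hHs.eigenvalues i.1|) +
            δ k) * normH (e k) := by
  intro k hwk _
  obtain rfl : normH = energyNorm H := funext hnormH
  obtain rfl : σ = energyNorm H := funext hσ
  subst hg
  have hs : 0 < energyNorm H (w k) := hH.energyNorm_pos hwk
  have hu' : energyNorm H u ≠ 0 := (hH.energyNorm_pos hu).ne'
  have he' : ∀ j, e j = energyResidual H u (w j) := he
  have hstep : w (k + 1) = w k + (ε * (a k / energyNorm H (w k))) • H *ᵥ e k := by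
    rw [hw, he, mulVec_sub, mulVec_smul]
  have hδk := hδ k
  set s := energyNorm H (w k)
  set τ := ε * (a k / s)
  set L := ⨆ i, hH.1.eigenvalues i
  have hδs : δ k * s = |τ| * L * energyNorm H (e k) := by
    rw [hδk, abs_mul, abs_div, abs_of_pos hε, abs_of_pos hs]
    field_simp
  have hlow : (1 - δ k) * s ≤ energyNorm H (w (k + 1)) := by
    have := hH.posSemidef.sub_le_energyNorm_add_smul_mulVec (w k) (e k) τ
    rw [hstep]
    linarith
  have hup := hH.posSemidef.energyNorm_mul_energyNorm_energyResidual_add_smul_le hu' hHs hHsdef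
    hs.ne' τ
  rw [← he' k, ← hstep, ← he' (k + 1), ← hεhat] at hup
  refine le_of_mul_le_mul_left ?_ hs
  calc s * ((1 - δ k) * energyNorm H (e (k + 1)))
      = (1 - δ k) * s * energyNorm H (e (k + 1)) := by ring
    _ ≤ energyNorm H (w (k + 1)) * energyNorm H (e (k + 1)) :=
        mul_le_mul_of_nonneg_right hlow (energyNorm_nonneg _ _)
    _ ≤ _ := hup
    _ = _ := by
        rw [IsHermitian.rhoStar]
        linear_combination energyNorm H (e k) * hδs.symm

/-- One-step contraction with the reduced matrix `H* = H − Huuᵀ H/(uᵀHu)`: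
`(1 − δ_k)·‖e_{k+1}‖_H ≤ (ρ*(I − ε̂_k H*) + δ_k)·‖e_k‖_H`, where `ρ*` is the maximum of
`|1 − ε̂_k λ|` over the nonzero eigenvalues `λ` of `H*`, and
`δ_k = λ_max·ε·|a_k|·‖e_k‖_H/σ(w_k)²`. -/
theorem bngd_one_step_contraction_Hstar
    {d : ℕ} (hd : 2 ≤ d)
    (H : Matrix (Fin d) (Fin d) ℝ) (hH : H.PosDef)
    (u : Fin d → ℝ) (hu : u ≠ 0)
    (εa ε : ℝ) (hεa : 0 < εa) (hε : 0 < ε)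
    (g : Fin d → ℝ) (hg : g = H.mulVec u)
    (σ : (Fin d → ℝ) → ℝ) (hσ : ∀ v, σ v = Real.sqrt (v ⬝ᵥ H.mulVec v))
    (normH : (Fin d → ℝ) → ℝ) (hnormH : ∀ x, normH x = Real.sqrt (x ⬝ᵥ H.mulVec x))
    (a : ℕ → ℝ) (w : ℕ → Fin d → ℝ) (hw0 : w 0 ≠ 0)
    (ha : ∀ k, a (k + 1) = a k + εa * ((w k ⬝ᵥ g) / σ (w k) - a k))
    (hw : ∀ k, w (k + 1) = w k +
      (ε * (a k / σ (w k))) • (g - ((w k ⬝ᵥ g) / (σ (w k)) ^ 2) • H.mulVec (w k)))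
    (e : ℕ → Fin d → ℝ)
    (he : ∀ k, e k = u - ((w k ⬝ᵥ g) / (σ (w k)) ^ 2) • w k)
    (εhat : ℕ → ℝ)
    (hεhat : ∀ k, εhat k = ε * (a k / σ (w k)) * ((w k ⬝ᵥ g) / (σ (w k)) ^ 2))
    (δ : ℕ → ℝ)
    (hδ : ∀ k, δ k = (⨆ i, hH.1.eigenvalues i) * ε * |a k| * normH (e k) / (σ (w k)) ^ 2)
    (Hs : Matrix (Fin d) (Fin d) ℝ)
    (hHsdef : Hs = H - (u ⬝ᵥ H.mulVec u)⁻¹ • vecMulVec (H.mulVec u) (H.mulVec u))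
    (hHs : Hs.IsHermitian) :
    ∀ k, w k ≠ 0 → w (k + 1) ≠ 0 →
      (1 - δ k) * normH (e (k + 1)) ≤
        ((⨆ i : {j : Fin d // hHs.eigenvalues j ≠ 0}, |1 - εhat k * hHs.eigenvalues i.1|) +
            δ k) * normH (e k) :=
  bngd_one_step_contraction_Hstar_general H hH u hu ε hε g hg σ hσ normH hnormH a w hw e he εhat
    hεhat δ hδ Hs hHsdef hHs
end
end

section
/- Eigenvalue interlacing for the BN-reduced matrix: Let H be a d×d real symmetric positive definite matrix and u ∈ ℝ^d nonzero, and set H* := H − (H u uᵀ H)/(uᵀHu). Then H* is positive semidefinite with H*u = 0, and denoting by λ_1(M) ≤ ... ≤ λ_d(M) the eigenvalues of a symmetric matrix M in increasing order, one has 0 = λ_1(H*) < λ_1(H) ≤ λ_2(H*) ≤ λ_2(H) ≤ λ_3(H*) ≤ ... ≤ λ_d(H*) ≤ λ_d(H); that is, λ_1(H*) = 0 and λ_{i-1}(H) ≤ λ_i(H*) ≤ λ_i(H) for all 2 ≤ i ≤ d. -/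
/-!
`H*` is the compression of `H` along `u`: with `y = x - (uᵀHx / uᵀHu) u` one has
`xᵀH*x = yᵀHy ≥ 0`, and `H*u = 0`, so `0` is the smallest eigenvalue of `H*`. Also
`xᵀH*x = xᵀHx - (uᵀHx)² / uᵀHu`, so `H* ≤ H`, with equality on the hyperplane `(Hu)⊥`.
Interlacing then follows from the Courant–Fischer principle: if `xᵀAx ≤ xᵀBx` on a subspace
`W` of codimension `k`, then `λ_i(A) ≤ λ_{i+k}(B)`. Otherwise `W`, the span of the eigenvectors
of `A` for `λ_i(A), …, λ_d(A)` and the span of those of `B` for `λ_1(B), …, λ_{i+k}(B)` have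
dimensions adding up to more than `2d`, so they share a nonzero vector, and comparing Rayleigh
quotients at that vector gives a contradiction.
-/

open Matrix Polynomial Module

theorem Submodule.finrank_add_finrank_le_finrank_add_finrank_inf {K V : Type*} [DivisionRing K]
    [AddCommGroup V] [Module K V] [FiniteDimensional K V] (U W : Submodule K V) :
    finrank K U + finrank K W ≤ finrank K V + finrank K ↥(U ⊓ W) := by
  rw [← Submodule.finrank_sup_add_finrank_inf_eq]
  exact Nat.add_le_add_right (Submodule.finrank_le _) _

theorem Submodule.exists_ne_zero_mem_inf_inf {K V : Type*} [DivisionRing K]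
    [AddCommGroup V] [Module K V] [FiniteDimensional K V] (U W X : Submodule K V)
    (h : 2 * finrank K V < finrank K U + finrank K W + finrank K X) :
    ∃ x ≠ 0, x ∈ U ∧ x ∈ W ∧ x ∈ X := by
  have h₁ := U.finrank_add_finrank_le_finrank_add_finrank_inf W
  have h₂ := (U ⊓ W).finrank_add_finrank_le_finrank_add_finrank_inf X
  obtain ⟨⟨x, hx⟩, hx0⟩ :=
    finrank_pos_iff_exists_ne_zero.mp (show 0 < finrank K ↥(U ⊓ W ⊓ X) by omega)
  exact ⟨x, by simpa using hx0, hx.1.1, hx.1.2, hx.2⟩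

namespace OrthonormalBasis

variable {ι E : Type*} [Fintype ι] [NormedAddCommGroup E] [InnerProductSpace ℝ E]
  (b : OrthonormalBasis ι ℝ E)

theorem norm_sq_eq_sum_repr_sq (x : E) : ‖x‖ ^ 2 = ∑ i, b.repr x i ^ 2 := by
  rw [← b.repr.norm_map, EuclideanSpace.norm_sq_eq]
  simp

theorem repr_eq_zero_of_mem_span {s : Set ι} {x : E} (hx : x ∈ Submodule.span ℝ (b '' s))
    {i : ι} (hi : i ∉ s) : b.repr x i = 0 := by
  rw [← b.coe_toBasis, Basis.mem_span_image] at hx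
  rw [← b.coe_toBasis_repr_apply]
  by_contra h
  exact hi (hx (Finsupp.mem_support_iff.mpr h))

end OrthonormalBasis

namespace LinearMap.IsSymmetric

variable {E : Type*} [NormedAddCommGroup E] [InnerProductSpace ℝ E] [FiniteDimensional ℝ E]
  {n : ℕ} {T S : E →ₗ[ℝ] E} (hT : T.IsSymmetric) (hS : S.IsSymmetric) (hn : finrank ℝ E = n)

theorem inner_apply_self_eq_sum_eigenvalues_mul_sq (x : E) :
    inner ℝ (T x) x = ∑ i, hT.eigenvalues hn i * (hT.eigenvectorBasis hn).repr x i ^ 2 := by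
  rw [← (hT.eigenvectorBasis hn).repr.inner_map_map, PiLp.inner_apply]
  simp only [eigenvectorBasis_apply_self_apply, RCLike.inner_apply, conj_trivial,
    RCLike.ofReal_real_eq_id, _root_.id]
  exact Finset.sum_congr rfl fun i _ => by ring

theorem inner_apply_self_le_of_mem_span {s : Set (Fin n)} {t : ℝ}
    (ht : ∀ i ∈ s, hT.eigenvalues hn i ≤ t) {x : E}
    (hx : x ∈ Submodule.span ℝ (hT.eigenvectorBasis hn '' s)) :
    inner ℝ (T x) x ≤ t * ‖x‖ ^ 2 := by
  rw [hT.inner_apply_self_eq_sum_eigenvalues_mul_sq hn,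
    (hT.eigenvectorBasis hn).norm_sq_eq_sum_repr_sq, Finset.mul_sum]
  refine Finset.sum_le_sum fun i _ => ?_
  by_cases hi : i ∈ s
  · exact mul_le_mul_of_nonneg_right (ht i hi) (sq_nonneg _)
  · simp [(hT.eigenvectorBasis hn).repr_eq_zero_of_mem_span hx hi]

theorem le_inner_apply_self_of_mem_span {s : Set (Fin n)} {t : ℝ}
    (ht : ∀ i ∈ s, t ≤ hT.eigenvalues hn i) {x : E}
    (hx : x ∈ Submodule.span ℝ (hT.eigenvectorBasis hn '' s)) :
    t * ‖x‖ ^ 2 ≤ inner ℝ (T x) x := by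
  rw [hT.inner_apply_self_eq_sum_eigenvalues_mul_sq hn,
    (hT.eigenvectorBasis hn).norm_sq_eq_sum_repr_sq, Finset.mul_sum]
  refine Finset.sum_le_sum fun i _ => ?_
  by_cases hi : i ∈ s
  · exact mul_le_mul_of_nonneg_right (ht i hi) (sq_nonneg _)
  · simp [(hT.eigenvectorBasis hn).repr_eq_zero_of_mem_span hx hi]

theorem finrank_span_eigenvectorBasis_image (s : Finset (Fin n)) :
    finrank ℝ (Submodule.span ℝ (hT.eigenvectorBasis hn '' s)) = s.card := by
  rw [Set.image_eq_range]
  have := finrank_span_eq_card ((hT.eigenvectorBasis hn).orthonormal.linearIndependent.comp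
    ((↑) : ↥(↑s : Set (Fin n)) → Fin n) Subtype.val_injective)
  simpa [Function.comp_def] using this

theorem eigenvalues_le_of_inner_le_on {W : Submodule ℝ E} {k : ℕ} (hW : n ≤ finrank ℝ W + k)
    (hTS : ∀ x ∈ W, inner ℝ (T x) x ≤ inner ℝ (S x) x) {i j : Fin n} (hij : (i : ℕ) + k ≤ j) :
    hT.eigenvalues hn j ≤ hS.eigenvalues hn i := by
  by_contra! hlt
  set V₁ := Submodule.span ℝ (hT.eigenvectorBasis hn '' ↑(Finset.Iic j))
  set V₂ := Submodule.span ℝ (hS.eigenvectorBasis hn '' ↑(Finset.Ici i))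
  have h₁ : finrank ℝ V₁ = j + 1 := by
    rw [hT.finrank_span_eigenvectorBasis_image hn, Fin.card_Iic]
  have h₂ : finrank ℝ V₂ = n - i := by
    rw [hS.finrank_span_eigenvectorBasis_image hn, Fin.card_Ici]
  obtain ⟨x, hx0, hx₁, hx₂, hxW⟩ := Submodule.exists_ne_zero_mem_inf_inf V₁ V₂ W
    (by rw [h₁, h₂, hn]; omega)
  have hT_ge : hT.eigenvalues hn j * ‖x‖ ^ 2 ≤ inner ℝ (T x) x :=
    hT.le_inner_apply_self_of_mem_span hn
      (fun l hl => hT.eigenvalues_antitone hn (Finset.mem_Iic.mp hl)) hx₁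
  have hS_le : inner ℝ (S x) x ≤ hS.eigenvalues hn i * ‖x‖ ^ 2 :=
    hS.inner_apply_self_le_of_mem_span hn
      (fun l hl => hS.eigenvalues_antitone hn (Finset.mem_Ici.mp hl)) hx₂
  have := mul_lt_mul_of_pos_right hlt (by positivity : 0 < ‖x‖ ^ 2)
  linarith [hTS x hxW]

end LinearMap.IsSymmetric

namespace Matrix

open WithLp

theorem charpoly_toEuclideanLin {𝕜 ι : Type*} [RCLike 𝕜] [Fintype ι] [DecidableEq ι]
    (A : Matrix ι ι 𝕜) : (toEuclideanLin A).charpoly = A.charpoly :=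
  charpoly_toLin A (PiLp.basisFun 2 𝕜 ι)

theorem inner_toEuclideanLin_self {ι : Type*} [Fintype ι] [DecidableEq ι] (A : Matrix ι ι ℝ)
    (x : EuclideanSpace ℝ ι) : inner ℝ (toEuclideanLin A x) x = ofLp x ⬝ᵥ A *ᵥ ofLp x := by
  rw [EuclideanSpace.inner_eq_star_dotProduct, star_trivial]
  rfl

theorem mem_spectrum_iff_exists_eq_of_charpoly_eq {K ι : Type*} [Field K] [Fintype ι]
    [DecidableEq ι] {A : Matrix ι ι K} {ev : ι → K} (hcp : A.charpoly = ∏ i, (X - C (ev i)))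
    {μ : K} : μ ∈ spectrum K A ↔ ∃ i, ev i = μ := by
  rw [mem_spectrum_iff_isRoot_charpoly, hcp, IsRoot.def, eval_prod, Finset.prod_eq_zero_iff]
  simp [sub_eq_zero, eq_comm]

section CharpolyRoots

variable {ι : Type*} [Fintype ι] [DecidableEq ι] {A : Matrix ι ι ℝ} {ev : ι → ℝ}

theorem PosDef.pos_of_charpoly_eq (hA : A.PosDef) (hcp : A.charpoly = ∏ i, (X - C (ev i)))
    (i : ι) : 0 < ev i := by
  obtain ⟨j, hj⟩ : ev i ∈ Set.range hA.isHermitian.eigenvalues := by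
    rw [← hA.isHermitian.spectrum_real_eq_range_eigenvalues,
      mem_spectrum_iff_exists_eq_of_charpoly_eq hcp]
    exact ⟨i, rfl⟩
  exact hj ▸ hA.eigenvalues_pos j

theorem PosSemidef.nonneg_of_charpoly_eq (hA : A.PosSemidef)
    (hcp : A.charpoly = ∏ i, (X - C (ev i))) (i : ι) : 0 ≤ ev i :=
  (posSemidef_iff_isHermitian_and_spectrum_nonneg.mp hA).2
    ((mem_spectrum_iff_exists_eq_of_charpoly_eq hcp).mpr ⟨i, rfl⟩)

theorem exists_eq_zero_of_charpoly_eq {u : ι → ℝ} (hu : u ≠ 0) (hAu : A *ᵥ u = 0)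
    (hcp : A.charpoly = ∏ i, (X - C (ev i))) : ∃ i, ev i = 0 := by
  rw [← mem_spectrum_iff_exists_eq_of_charpoly_eq hcp, spectrum.zero_mem_iff,
    isUnit_iff_isUnit_det, isUnit_iff_ne_zero, not_not]
  exact exists_mulVec_eq_zero_iff.mp ⟨u, hu, hAu⟩

end CharpolyRoots

namespace IsHermitian

variable {n : ℕ} {A B : Matrix (Fin n) (Fin n) ℝ} {evA evB : Fin n → ℝ}

theorem eq_eigenvalues_toEuclideanLin_rev (hA : A.IsHermitian) (hmA : Monotone evA)
    (hcpA : A.charpoly = ∏ i, (X - C (evA i))) (i : Fin n) :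
    evA i =
      (isSymmetric_toEuclideanLin_iff.mpr hA).eigenvalues finrank_euclideanSpace_fin i.rev := by
  set hT := isSymmetric_toEuclideanLin_iff.mpr hA
  have hroots : Multiset.map (evA ∘ Fin.rev) Finset.univ.val =
      Multiset.map (hT.eigenvalues finrank_euclideanSpace_fin) Finset.univ.val := by
    have h := hT.roots_charpoly_eq_eigenvalues finrank_euclideanSpace_fin
    rw [charpoly_toEuclideanLin, hcpA] at h
    rw [← Multiset.map_map, show (Fin.rev : Fin n → Fin n) = Fin.revPerm from rfl,
      Multiset.map_univ_val_equiv]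
    simpa [Polynomial.roots_prod, X_sub_C_ne_zero, Finset.prod_ne_zero_iff] using h
  have hlist : List.ofFn (evA ∘ Fin.rev) = List.ofFn (hT.eigenvalues finrank_euclideanSpace_fin) :=
    List.Perm.eq_of_sortedGE (hmA.comp_antitone Fin.rev_anti).sortedGE_ofFn
      (hT.eigenvalues_antitone _).sortedGE_ofFn
      (Multiset.coe_eq_coe.mp (by simpa only [Fin.univ_val_map] using hroots))
  simpa using congrFun (List.ofFn_injective hlist) i.rev

theorem eigenvalue_le_of_dotProduct_mulVec_le_on (hA : A.IsHermitian) (hB : B.IsHermitian)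
    (hmA : Monotone evA) (hcpA : A.charpoly = ∏ i, (X - C (evA i)))
    (hmB : Monotone evB) (hcpB : B.charpoly = ∏ i, (X - C (evB i)))
    {W : Submodule ℝ (EuclideanSpace ℝ (Fin n))} {k : ℕ} (hW : n ≤ finrank ℝ W + k)
    (hAB : ∀ x ∈ W, ofLp x ⬝ᵥ A *ᵥ ofLp x ≤ ofLp x ⬝ᵥ B *ᵥ ofLp x) {i j : Fin n}
    (hij : (i : ℕ) + k ≤ j) : evA i ≤ evB j := by
  rw [hA.eq_eigenvalues_toEuclideanLin_rev hmA hcpA, hB.eq_eigenvalues_toEuclideanLin_rev hmB hcpB]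
  refine LinearMap.IsSymmetric.eigenvalues_le_of_inner_le_on _ _ _ hW
    (fun x hx => by simpa only [inner_toEuclideanLin_self] using hAB x hx) ?_
  simp only [Fin.val_rev]
  omega

theorem eigenvalue_le_of_dotProduct_mulVec_le (hA : A.IsHermitian) (hB : B.IsHermitian)
    (hmA : Monotone evA) (hcpA : A.charpoly = ∏ i, (X - C (evA i)))
    (hmB : Monotone evB) (hcpB : B.charpoly = ∏ i, (X - C (evB i)))
    (hAB : ∀ x, x ⬝ᵥ A *ᵥ x ≤ x ⬝ᵥ B *ᵥ x) (i : Fin n) : evA i ≤ evB i :=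
  hA.eigenvalue_le_of_dotProduct_mulVec_le_on hB hmA hcpA hmB hcpB (W := ⊤) (k := 0)
    (by simp) (fun x _ => hAB _) (by simp)

theorem eigenvalue_le_of_dotProduct_mulVec_le_of_dotProduct_eq_zero (hA : A.IsHermitian)
    (hB : B.IsHermitian) (hmA : Monotone evA) (hcpA : A.charpoly = ∏ i, (X - C (evA i)))
    (hmB : Monotone evB) (hcpB : B.charpoly = ∏ i, (X - C (evB i))) (v : Fin n → ℝ)
    (hAB : ∀ x, v ⬝ᵥ x = 0 → x ⬝ᵥ A *ᵥ x ≤ x ⬝ᵥ B *ᵥ x) {i j : Fin n} (hij : i < j) :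
    evA i ≤ evB j := by
  set K : Submodule ℝ (EuclideanSpace ℝ (Fin n)) := ℝ ∙ toLp 2 v
  refine hA.eigenvalue_le_of_dotProduct_mulVec_le_on hB hmA hcpA hmB hcpB
    (W := Kᗮ) (k := 1) ?_ (fun x hx => hAB _ ?_) hij
  · have h := K.finrank_add_finrank_orthogonal
    have h₁ : finrank ℝ K ≤ 1 := by simpa using finrank_span_le_card {toLp 2 v}
    rw [finrank_euclideanSpace_fin] at h
    omega
  · rwa [Submodule.mem_orthogonal_singleton_iff_inner_right,
      EuclideanSpace.inner_eq_star_dotProduct, star_trivial, dotProduct_comm] at hx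

end IsHermitian

variable {ι : Type*} [Fintype ι]

noncomputable def bnReduced (H : Matrix ι ι ℝ) (u : ι → ℝ) : Matrix ι ι ℝ :=
  H - (u ⬝ᵥ H *ᵥ u)⁻¹ • vecMulVec (H *ᵥ u) (H *ᵥ u)

variable {H : Matrix ι ι ℝ} {u : ι → ℝ}

theorem bnReduced_mulVec (x : ι → ℝ) :
    bnReduced H u *ᵥ x = H *ᵥ x - ((u ⬝ᵥ H *ᵥ u)⁻¹ * (H *ᵥ u ⬝ᵥ x)) • H *ᵥ u := by
  rw [bnReduced, sub_mulVec, smul_mulVec, vecMulVec_mulVec, op_smul_eq_smul, smul_smul]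

theorem bnReduced_mulVec_self (hc : u ⬝ᵥ H *ᵥ u ≠ 0) : bnReduced H u *ᵥ u = 0 := by
  rw [bnReduced_mulVec, dotProduct_comm (H *ᵥ u) u, inv_mul_cancel₀ hc, one_smul, sub_self]

theorem dotProduct_bnReduced_mulVec (x : ι → ℝ) :
    x ⬝ᵥ bnReduced H u *ᵥ x = x ⬝ᵥ H *ᵥ x - (u ⬝ᵥ H *ᵥ u)⁻¹ * (H *ᵥ u ⬝ᵥ x) ^ 2 := by
  rw [bnReduced_mulVec, dotProduct_sub, dotProduct_smul, smul_eq_mul, dotProduct_comm x (H *ᵥ u)]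
  ring

theorem IsHermitian.bnReduced (hH : H.IsHermitian) (u : ι → ℝ) :
    (Matrix.bnReduced H u).IsHermitian := by
  refine hH.sub (IsHermitian.smul ?_ (.all _))
  ext i j
  simp [vecMulVec_apply, mul_comm]

theorem IsHermitian.dotProduct_bnReduced_mulVec_eq (hH : H.IsHermitian) (x : ι → ℝ) :
    x ⬝ᵥ Matrix.bnReduced H u *ᵥ x =
      (x - ((u ⬝ᵥ H *ᵥ u)⁻¹ * (H *ᵥ u ⬝ᵥ x)) • u) ⬝ᵥ
        H *ᵥ (x - ((u ⬝ᵥ H *ᵥ u)⁻¹ * (H *ᵥ u ⬝ᵥ x)) • u) := by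
  have hux : u ⬝ᵥ H *ᵥ x = H *ᵥ u ⬝ᵥ x := by
    rw [dotProduct_mulVec, ← mulVec_transpose, ← conjTranspose_eq_transpose_of_trivial, hH.eq]
  have hxu : x ⬝ᵥ H *ᵥ u = H *ᵥ u ⬝ᵥ x := dotProduct_comm _ _
  rw [dotProduct_bnReduced_mulVec]
  simp only [mulVec_sub, mulVec_smul, dotProduct_sub, sub_dotProduct, dotProduct_smul,
    smul_dotProduct, smul_eq_mul, hux, hxu]
  generalize u ⬝ᵥ H *ᵥ u = c
  generalize H *ᵥ u ⬝ᵥ x = a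
  rcases eq_or_ne c 0 with rfl | hc
  · simp
  · field_simp
    ring

theorem PosSemidef.bnReduced (hH : H.PosSemidef) (u : ι → ℝ) :
    (Matrix.bnReduced H u).PosSemidef :=
  .of_dotProduct_mulVec_nonneg (hH.isHermitian.bnReduced u) fun x => by
    rw [star_trivial, hH.isHermitian.dotProduct_bnReduced_mulVec_eq]
    simpa using hH.dotProduct_mulVec_nonneg (x - ((u ⬝ᵥ H *ᵥ u)⁻¹ * (H *ᵥ u ⬝ᵥ x)) • u)

end Matrix

/-- Eigenvalue interlacing for the BN-reduced matrix `H* = H − Huuᵀ H/(uᵀHu)`: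
`H*` is positive semidefinite with `H*u = 0`, and if `λ_1(H*) ≤ ... ≤ λ_d(H*)` and
`λ_1(H) ≤ ... ≤ λ_d(H)` enumerate the eigenvalues (with multiplicity, in increasing
order), then `λ_1(H*) = 0 < λ_1(H)` and `λ_{i-1}(H) ≤ λ_i(H*) ≤ λ_i(H)` for `2 ≤ i ≤ d`. -/
theorem bngd_Hstar_eigenvalue_interlacing
    {d : ℕ} (hd : 2 ≤ d)
    (H : Matrix (Fin d) (Fin d) ℝ) (hH : H.PosDef)
    (u : Fin d → ℝ) (hu : u ≠ 0)
    (Hs : Matrix (Fin d) (Fin d) ℝ)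
    (hHsdef : Hs = H - (u ⬝ᵥ H.mulVec u)⁻¹ • vecMulVec (H.mulVec u) (H.mulVec u))
    -- eigenvalues of H with multiplicity, in increasing order
    (evH : Fin d → ℝ) (hmonoH : Monotone evH)
    (hcpH : H.charpoly = ∏ i, (X - C (evH i)))
    -- eigenvalues of H* with multiplicity, in increasing order
    (evHs : Fin d → ℝ) (hmonoHs : Monotone evHs)
    (hcpHs : Hs.charpoly = ∏ i, (X - C (evHs i))) :
    Hs.PosSemidef ∧ Hs.mulVec u = 0 ∧
    evHs ⟨0, by omega⟩ = 0 ∧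
    evHs ⟨0, by omega⟩ < evH ⟨0, by omega⟩ ∧
    ∀ i : ℕ, ∀ h1 : 1 ≤ i, ∀ h2 : i < d,
      evH ⟨i - 1, by omega⟩ ≤ evHs ⟨i, h2⟩ ∧ evHs ⟨i, h2⟩ ≤ evH ⟨i, h2⟩ := by
  obtain rfl : Hs = bnReduced H u := hHsdef
  have hc : 0 < u ⬝ᵥ H *ᵥ u := by simpa using hH.dotProduct_mulVec_pos hu
  have hpsd := hH.posSemidef.bnReduced u
  have hker := bnReduced_mulVec_self hc.ne'
  have hzero : evHs ⟨0, by omega⟩ = 0 := by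
    obtain ⟨k, hk⟩ := exists_eq_zero_of_charpoly_eq hu hker hcpHs
    exact le_antisymm (hk ▸ hmonoHs (Nat.zero_le k)) (hpsd.nonneg_of_charpoly_eq hcpHs _)
  refine ⟨hpsd, hker, hzero, hzero ▸ hH.pos_of_charpoly_eq hcpH _, fun i h1 h2 => ⟨?_, ?_⟩⟩
  · refine hH.isHermitian.eigenvalue_le_of_dotProduct_mulVec_le_of_dotProduct_eq_zero
      hpsd.isHermitian hmonoH hcpH hmonoHs hcpHs (H *ᵥ u) (fun x hx => ?_) (Fin.mk_lt_mk.mpr (by omega))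
    rw [dotProduct_bnReduced_mulVec, hx]
    simp
  · refine hpsd.isHermitian.eigenvalue_le_of_dotProduct_mulVec_le hH.isHermitian
      hmonoHs hcpHs hmonoH hcpH (fun x => ?_) _
    rw [dotProduct_bnReduced_mulVec]
    exact sub_le_self _ (mul_nonneg (inv_nonneg.mpr hc.le) (sq_nonneg _))
end

section
/- The pseudo-condition number of H* is at most the condition number of H: Let H be a d×d real symmetric positive definite matrix (d ≥ 2), u ∈ ℝ^d nonzero, and H* := H − (H u uᵀ H)/(uᵀHu). Then λ_d(H*)/λ_2(H*) ≤ λ_d(H)/λ_1(H), where λ_1(M) ≤ ... ≤ λ_d(M) are the eigenvalues of M in increasing order (so that λ_2(H*) is the smallest nonzero eigenvalue of H* and λ_d(H*) its largest). -/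
/-! `H*` is `H` minus a positive semidefinite rank-one term, so its quadratic form is dominated by
that of `H` and `λ_max(H*) ≤ λ_max(H)`. Since `H* u = 0`, an eigenvector `v` of `H*` for a nonzero
eigenvalue is orthogonal to `u`; completing the square gives `vᵀ H* v = zᵀ H z` with `z = v - t u`,
and `‖z‖ ≥ ‖v‖` because `v ⊥ u`, so that eigenvalue is at least `λ_min(H)`. -/

open Matrix

noncomputable section

namespace Matrix

variable {n : Type*} [Fintype n]

lemma vecMulVec_self_mulVec (w x : n → ℝ) : vecMulVec w w *ᵥ x = (w ⬝ᵥ x) • w := by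
  rw [vecMulVec_mulVec, op_smul_eq_smul]

lemma IsHermitian.dotProduct_mulVec_comm_s15 {A : Matrix n n ℝ} (hA : A.IsHermitian) (x y : n → ℝ) :
    x ⬝ᵥ A *ᵥ y = y ⬝ᵥ A *ᵥ x := by
  rw [dotProduct_mulVec, dotProduct_comm, ← mulVec_transpose,
    ← conjTranspose_eq_transpose_of_trivial, hA.eq]

section Spectral

variable [DecidableEq n] {A : Matrix n n ℝ} (hA : A.IsHermitian)

namespace IsHermitian

lemma dotProduct_mulVec_eq_sum_eigenvalues_mul_sq (x : n → ℝ) :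
    x ⬝ᵥ A *ᵥ x =
      ∑ i, hA.eigenvalues i * (star (hA.eigenvectorUnitary : Matrix n n ℝ) *ᵥ x) i ^ 2 := by
  conv_lhs => rw [hA.spectral_theorem, Unitary.conjStarAlgAut_apply]
  rw [← mulVec_mulVec, ← mulVec_mulVec, dotProduct_mulVec, ← mulVec_transpose,
    ← conjTranspose_eq_transpose_of_trivial, ← star_eq_conjTranspose]
  simp only [dotProduct, mulVec_diagonal, Function.comp_apply, RCLike.ofReal_real_eq_id, id_eq]
  exact Finset.sum_congr rfl fun i _ => by ring

lemma dotProduct_self_eq_sum_sq (x : n → ℝ) :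
    x ⬝ᵥ x = ∑ i, (star (hA.eigenvectorUnitary : Matrix n n ℝ) *ᵥ x) i ^ 2 := by
  set U : Matrix n n ℝ := ↑hA.eigenvectorUnitary
  have hU : U * star U = 1 := mem_unitaryGroup_iff.mp hA.eigenvectorUnitary.2
  rw [show x ⬝ᵥ x = x ⬝ᵥ (U * star U) *ᵥ x by rw [hU, one_mulVec]]
  rw [← mulVec_mulVec, dotProduct_mulVec, ← mulVec_transpose,
    ← conjTranspose_eq_transpose_of_trivial, ← star_eq_conjTranspose]
  simp only [dotProduct, sq]

lemma dotProduct_mulVec_le_iSup_eigenvalues_mul (x : n → ℝ) :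
    x ⬝ᵥ A *ᵥ x ≤ (⨆ i, hA.eigenvalues i) * (x ⬝ᵥ x) := by
  rw [hA.dotProduct_mulVec_eq_sum_eigenvalues_mul_sq, hA.dotProduct_self_eq_sum_sq,
    Finset.mul_sum]
  exact Finset.sum_le_sum fun i _ => mul_le_mul_of_nonneg_right
    (le_ciSup (Set.finite_range _).bddAbove i) (sq_nonneg _)

lemma iInf_eigenvalues_mul_le_dotProduct_mulVec (x : n → ℝ) :
    (⨅ i, hA.eigenvalues i) * (x ⬝ᵥ x) ≤ x ⬝ᵥ A *ᵥ x := by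
  rw [hA.dotProduct_mulVec_eq_sum_eigenvalues_mul_sq, hA.dotProduct_self_eq_sum_sq,
    Finset.mul_sum]
  exact Finset.sum_le_sum fun i _ => mul_le_mul_of_nonneg_right
    (ciInf_le (Set.finite_range _).bddBelow i) (sq_nonneg _)

lemma eigenvectorBasis_dotProduct_self (i : n) :
    ⇑(hA.eigenvectorBasis i) ⬝ᵥ ⇑(hA.eigenvectorBasis i) = 1 := by
  have h := real_inner_self_eq_norm_sq (hA.eigenvectorBasis i)
  rw [hA.eigenvectorBasis.orthonormal.1 i, EuclideanSpace.inner_eq_star_dotProduct] at h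
  simpa using h

lemma eigenvalues_eq_dotProduct_mulVec (i : n) :
    hA.eigenvalues i = ⇑(hA.eigenvectorBasis i) ⬝ᵥ A *ᵥ ⇑(hA.eigenvectorBasis i) := by
  rw [mulVec_eigenvectorBasis, dotProduct_smul, eigenvectorBasis_dotProduct_self hA, smul_eq_mul,
    mul_one]

lemma dotProduct_eigenvectorBasis_eq_zero {u : n → ℝ} (hu : A *ᵥ u = 0) {i : n}
    (hi : hA.eigenvalues i ≠ 0) : u ⬝ᵥ ⇑(hA.eigenvectorBasis i) = 0 := by
  have h : u ⬝ᵥ A *ᵥ ⇑(hA.eigenvectorBasis i) = 0 := by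
    rw [hA.dotProduct_mulVec_comm_s15, hu, dotProduct_zero]
  rw [mulVec_eigenvectorBasis, dotProduct_smul, smul_eq_mul] at h
  exact (mul_eq_zero.mp h).resolve_left hi

end IsHermitian

end Spectral

/-- The paper's `H*`. -/
def rankOneDeflation (H : Matrix n n ℝ) (u : n → ℝ) : Matrix n n ℝ :=
  H - (u ⬝ᵥ H *ᵥ u)⁻¹ • vecMulVec (H *ᵥ u) (H *ᵥ u)

variable {H : Matrix n n ℝ} {u : n → ℝ}

lemma dotProduct_rankOneDeflation_mulVec (x : n → ℝ) :
    x ⬝ᵥ rankOneDeflation H u *ᵥ x = x ⬝ᵥ H *ᵥ x - (u ⬝ᵥ H *ᵥ u)⁻¹ * (H *ᵥ u ⬝ᵥ x) ^ 2 := by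
  rw [rankOneDeflation, sub_mulVec, dotProduct_sub, smul_mulVec, vecMulVec_self_mulVec,
    dotProduct_smul, dotProduct_smul, dotProduct_comm x (H *ᵥ u), smul_eq_mul, smul_eq_mul, sq]

lemma rankOneDeflation_mulVec_self (hc : u ⬝ᵥ H *ᵥ u ≠ 0) : rankOneDeflation H u *ᵥ u = 0 := by
  rw [rankOneDeflation, sub_mulVec, smul_mulVec, vecMulVec_self_mulVec, dotProduct_comm (H *ᵥ u),
    smul_smul, inv_mul_cancel₀ hc, one_smul, sub_self]

/-- `t = (Hu)ᵀx / uᵀHu` minimises `t ↦ (x - t u)ᵀ H (x - t u)`, with minimum `xᵀ H* x`. -/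
lemma dotProduct_rankOneDeflation_mulVec_eq (hH : H.IsHermitian) (hc : u ⬝ᵥ H *ᵥ u ≠ 0)
    (x : n → ℝ) :
    x ⬝ᵥ rankOneDeflation H u *ᵥ x =
      (x - (H *ᵥ u ⬝ᵥ x / u ⬝ᵥ H *ᵥ u) • u) ⬝ᵥ
        H *ᵥ (x - (H *ᵥ u ⬝ᵥ x / u ⬝ᵥ H *ᵥ u) • u) := by
  have hux : u ⬝ᵥ H *ᵥ x = H *ᵥ u ⬝ᵥ x := by rw [hH.dotProduct_mulVec_comm_s15, dotProduct_comm]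
  simp only [dotProduct_rankOneDeflation_mulVec, mulVec_sub, mulVec_smul, sub_dotProduct,
    dotProduct_sub, smul_dotProduct, dotProduct_smul, smul_eq_mul, hux,
    dotProduct_comm x (H *ᵥ u)]
  field_simp
  ring

lemma eigenvalues_rankOneDeflation_le [DecidableEq n] (hH : H.PosSemidef)
    (hD : (rankOneDeflation H u).IsHermitian) (i : n) :
    hD.eigenvalues i ≤ ⨆ j, hH.1.eigenvalues j := by
  set v := ⇑(hD.eigenvectorBasis i)
  have hc : 0 ≤ u ⬝ᵥ H *ᵥ u := by simpa using hH.dotProduct_mulVec_nonneg u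
  calc hD.eigenvalues i = v ⬝ᵥ H *ᵥ v - (u ⬝ᵥ H *ᵥ u)⁻¹ * (H *ᵥ u ⬝ᵥ v) ^ 2 := by
        rw [hD.eigenvalues_eq_dotProduct_mulVec, dotProduct_rankOneDeflation_mulVec]
    _ ≤ v ⬝ᵥ H *ᵥ v := sub_le_self _ (by positivity)
    _ ≤ (⨆ j, hH.1.eigenvalues j) * (v ⬝ᵥ v) :=
        hH.1.dotProduct_mulVec_le_iSup_eigenvalues_mul v
    _ = ⨆ j, hH.1.eigenvalues j := by rw [hD.eigenvectorBasis_dotProduct_self, mul_one]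

lemma iInf_eigenvalues_le_eigenvalues_rankOneDeflation [DecidableEq n] (hH : H.PosSemidef)
    (hc : u ⬝ᵥ H *ᵥ u ≠ 0) (hD : (rankOneDeflation H u).IsHermitian) {i : n}
    (hi : hD.eigenvalues i ≠ 0) :
    ⨅ j, hH.1.eigenvalues j ≤ hD.eigenvalues i := by
  set v := ⇑(hD.eigenvectorBasis i)
  set z := v - (H *ᵥ u ⬝ᵥ v / u ⬝ᵥ H *ᵥ u) • u
  have huv : u ⬝ᵥ v = 0 :=
    hD.dotProduct_eigenvectorBasis_eq_zero (rankOneDeflation_mulVec_self hc) hi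
  have hv : v ⬝ᵥ v = 1 := hD.eigenvectorBasis_dotProduct_self i
  have hz : 1 ≤ z ⬝ᵥ z := by
    have : z ⬝ᵥ z = 1 + (H *ᵥ u ⬝ᵥ v / u ⬝ᵥ H *ᵥ u) ^ 2 * (u ⬝ᵥ u) := by
      simp only [z, sub_dotProduct, dotProduct_sub, smul_dotProduct, dotProduct_smul, smul_eq_mul,
        hv, dotProduct_comm v u, huv]
      ring
    rw [this]
    have : 0 ≤ u ⬝ᵥ u := Finset.sum_nonneg fun j _ => mul_self_nonneg (u j)
    nlinarith
  have hmin : 0 ≤ ⨅ j, hH.1.eigenvalues j := Real.iInf_nonneg hH.eigenvalues_nonneg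
  calc ⨅ j, hH.1.eigenvalues j ≤ (⨅ j, hH.1.eigenvalues j) * (z ⬝ᵥ z) :=
        le_mul_of_one_le_right hmin hz
    _ ≤ z ⬝ᵥ H *ᵥ z := hH.1.iInf_eigenvalues_mul_le_dotProduct_mulVec z
    _ = hD.eigenvalues i := by
      rw [hD.eigenvalues_eq_dotProduct_mulVec, dotProduct_rankOneDeflation_mulVec_eq hH.1 hc]

end Matrix

theorem bngd_Hstar_condition_number_le_general
    {d : ℕ}
    (H : Matrix (Fin d) (Fin d) ℝ) (hH : H.PosDef)
    (u : Fin d → ℝ) (hu : u ≠ 0)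
    (Hs : Matrix (Fin d) (Fin d) ℝ)
    (hHsdef : Hs = H - (u ⬝ᵥ H.mulVec u)⁻¹ • vecMulVec (H.mulVec u) (H.mulVec u))
    (hHs : Hs.IsHermitian) :
    (⨆ i, hHs.eigenvalues i) / (⨅ i : {j : Fin d // hHs.eigenvalues j ≠ 0}, hHs.eigenvalues i.1)
      ≤ (⨆ i, hH.1.eigenvalues i) / (⨅ i, hH.1.eigenvalues i) := by
  subst hHsdef
  have hc : 0 < u ⬝ᵥ H *ᵥ u := by simpa using hH.dotProduct_mulVec_pos hu
  have hmax : 0 ≤ ⨆ i, hH.1.eigenvalues i := Real.iSup_nonneg fun i => (hH.eigenvalues_pos i).le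
  rcases isEmpty_or_nonempty {j // hHs.eigenvalues j ≠ 0} with _ | hne
  · rw [Real.iInf_of_isEmpty, div_zero]
    exact div_nonneg hmax (Real.iInf_nonneg fun i => (hH.eigenvalues_pos i).le)
  · have : Nonempty (Fin d) := hne.map Subtype.val
    have hmin : 0 < ⨅ i, hH.1.eigenvalues i := by
      obtain ⟨k, hk⟩ := exists_eq_ciInf_of_finite (f := hH.1.eigenvalues)
      exact hk ▸ hH.eigenvalues_pos k
    exact div_le_div₀ hmax (ciSup_le (eigenvalues_rankOneDeflation_le hH.posSemidef hHs)) hmin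
      (le_ciInf fun k =>
        iInf_eigenvalues_le_eigenvalues_rankOneDeflation hH.posSemidef hc.ne' hHs k.2)

/-- The pseudo-condition number of `H* = H − Huuᵀ H/(uᵀHu)` is at most the condition
number of `H`: the ratio of the largest eigenvalue of `H*` to its smallest nonzero
eigenvalue is at most `λ_max(H)/λ_min(H)`. -/
theorem bngd_Hstar_condition_number_le
    {d : ℕ} (hd : 2 ≤ d)
    (H : Matrix (Fin d) (Fin d) ℝ) (hH : H.PosDef)
    (u : Fin d → ℝ) (hu : u ≠ 0)
    (Hs : Matrix (Fin d) (Fin d) ℝ)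
    (hHsdef : Hs = H - (u ⬝ᵥ H.mulVec u)⁻¹ • vecMulVec (H.mulVec u) (H.mulVec u))
    (hHs : Hs.IsHermitian) :
    (⨆ i, hHs.eigenvalues i) / (⨅ i : {j : Fin d // hHs.eigenvalues j ≠ 0}, hHs.eigenvalues i.1)
      ≤ (⨆ i, hH.1.eigenvalues i) / (⨅ i, hH.1.eigenvalues i) :=
  bngd_Hstar_condition_number_le_general H hH u hu Hs hHsdef hHs
end
end

section
/- Dichotomy from the separation property: Let H be a d×d real symmetric positive definite matrix, u ∈ ℝ^d nonzero, g := Hu, and let (w_k) be any sequence in ℝ^d with ‖w_k‖ ≥ 1 for all k. Define y_k := w_kᵀg and q_k := uᵀHu − y_k²/(w_kᵀHw_k). If ‖w_{k+1} − w_k‖ → 0 and y_k²·q_k → 0 as k → ∞, then either y_k² → 0 or q_k → 0. -/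
/-!
Write `s_k := w_kᵀHw_k`. By definition of `q_k`, `y_k² = (uᵀHu − q_k) s_k`, and positive
definiteness gives `s_k ≥ c‖w_k‖² ≥ c > 0`; so `q_k < uᵀHu/2` forces `|y_k| ≥ δ` for a fixed
`δ > 0` (separation). Since `y_k² q_k → 0`, eventually every `k` has either `|y_k| ≥ δ` or
`q_k ≥ uᵀHu/2` and then `|y_k| < δ/2`. The increments `y_{k+1} − y_k = (w_{k+1} − w_k)ᵀg` tend
to `0`, so `|y_k|` cannot jump across the gap `[δ/2, δ)` and eventually stays on one side of it.
On the lower side `q_k` is bounded below, so `y_k² → 0`; on the upper side `y_k²` is bounded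
below, so `q_k → 0`.
-/

open Matrix Filter Topology

theorem exists_pos_mul_norm_sq_le_of_homogeneous {E : Type*} [NormedAddCommGroup E]
    [NormedSpace ℝ E] [FiniteDimensional ℝ E] {Q : E → ℝ} (hQ : Continuous Q)
    (hsmul : ∀ (t : ℝ) (x : E), Q (t • x) = t ^ 2 * Q x) (hpos : ∀ x, x ≠ 0 → 0 < Q x) :
    ∃ c > 0, ∀ x, c * ‖x‖ ^ 2 ≤ Q x := by
  have hQ0 : Q 0 = 0 := by simpa using hsmul 0 0
  rcases subsingleton_or_nontrivial E with hE | hE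
  · exact ⟨1, one_pos, fun x => by simp [Subsingleton.elim x 0, hQ0]⟩
  obtain ⟨x₀, hx₀, hmin⟩ := (isCompact_sphere (0 : E) 1).exists_isMinOn
    (NormedSpace.sphere_nonempty.2 zero_le_one) hQ.continuousOn
  have hx₀ : ‖x₀‖ = 1 := by simpa using hx₀
  refine ⟨Q x₀, hpos x₀ (norm_ne_zero_iff.1 (by simp [hx₀])), fun x => ?_⟩
  rcases eq_or_ne x 0 with rfl | hx
  · simp [hQ0]
  have hxn : 0 < ‖x‖ := norm_pos_iff.2 hx
  have hunit : ‖x‖⁻¹ • x ∈ Metric.sphere (0 : E) 1 := by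
    simp [norm_smul, hxn.ne']
  calc Q x₀ * ‖x‖ ^ 2 ≤ Q (‖x‖⁻¹ • x) * ‖x‖ ^ 2 := by gcongr; exact hmin hunit
    _ = Q x := by rw [hsmul, mul_comm, ← mul_assoc, ← mul_pow, mul_inv_cancel₀ hxn.ne', one_pow,
        one_mul]

theorem norm_toLp_eq_sqrt_dotProduct {n : Type*} [Fintype n] (x : n → ℝ) :
    ‖WithLp.toLp 2 x‖ = Real.sqrt (x ⬝ᵥ x) := by
  rw [EuclideanSpace.norm_eq]
  simp [dotProduct, sq]

theorem abs_dotProduct_le {n : Type*} [Fintype n] (a b : n → ℝ) :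
    |a ⬝ᵥ b| ≤ Real.sqrt (a ⬝ᵥ a) * Real.sqrt (b ⬝ᵥ b) := by
  simpa [← norm_toLp_eq_sqrt_dotProduct, EuclideanSpace.inner_eq_star_dotProduct,
    dotProduct_comm] using abs_real_inner_le_norm (WithLp.toLp 2 a) (WithLp.toLp 2 b)

theorem Matrix.PosDef.exists_pos_mul_dotProduct_le {n : Type*} [Fintype n]
    {H : Matrix n n ℝ} (hH : H.PosDef) : ∃ c > 0, ∀ x : n → ℝ, c * (x ⬝ᵥ x) ≤ x ⬝ᵥ H *ᵥ x := by
  obtain ⟨c, hc, hle⟩ := exists_pos_mul_norm_sq_le_of_homogeneous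
    (Q := fun v : EuclideanSpace ℝ n => v.ofLp ⬝ᵥ H *ᵥ v.ofLp)
    (by simp only [dotProduct, mulVec]; fun_prop)
    (fun t v => by simp only [WithLp.ofLp_smul, mulVec_smul, smul_dotProduct, dotProduct_smul,
      smul_eq_mul]; ring)
    (fun v hv => by simpa using hH.dotProduct_mulVec_pos (x := v.ofLp) (by simpa using hv))
  refine ⟨c, hc, fun x => ?_⟩
  simpa [norm_toLp_eq_sqrt_dotProduct, Real.sq_sqrt (by simpa using dotProduct_self_star_nonneg x)]
    using hle (WithLp.toLp 2 x)

theorem eventually_lt_or_eventually_le_of_abs_sub_lt {z : ℕ → ℝ} {a b : ℝ}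
    (hstep : ∀ᶠ k in atTop, |z (k + 1) - z k| < b - a)
    (hgap : ∀ᶠ k in atTop, z k < a ∨ b ≤ z k) :
    (∀ᶠ k in atTop, z k < a) ∨ ∀ᶠ k in atTop, b ≤ z k := by
  obtain ⟨N, hN⟩ := eventually_atTop.1 (hstep.and hgap)
  have persists (P : ℝ → Prop) (h₀ : P (z N)) (hsucc : ∀ k, N ≤ k → P (z k) → P (z (k + 1))) :
      ∀ᶠ k in atTop, P (z k) :=
    eventually_atTop.2 ⟨N, fun k hk => Nat.le_induction h₀ hsucc k hk⟩
  rcases (hN N le_rfl).2 with h | h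
  · refine .inl (persists (· < a) h fun k hk hzk => ?_)
    have hjump := (abs_lt.1 (hN k hk).1).2
    exact (hN (k + 1) (by omega)).2.resolve_right (by intro; linarith)
  · refine .inr (persists (b ≤ ·) h fun k hk hzk => ?_)
    have hjump := (abs_lt.1 (hN k hk).1).1
    exact (hN (k + 1) (by omega)).2.resolve_left (by intro; linarith)

theorem tendsto_zero_of_tendsto_mul_of_le_abs {α : Type*} {l : Filter α} {f g : α → ℝ} {r : ℝ}
    (hr : 0 < r) (hg : ∀ᶠ k in l, r ≤ |g k|) (hfg : Tendsto (fun k => f k * g k) l (𝓝 0)) :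
    Tendsto f l (𝓝 0) := by
  refine squeeze_zero_norm' (a := fun k => |f k * g k| / r) ?_
    (by simpa using hfg.abs.div_const r)
  filter_upwards [hg] with k hk
  rw [Real.norm_eq_abs, le_div_iff₀ hr, abs_mul]
  exact mul_le_mul_of_nonneg_left hk (abs_nonneg _)

theorem tendsto_sq_or_tendsto_zero_of_separated {y q : ℕ → ℝ} {r δ : ℝ} (hr : 0 < r) (hδ : 0 < δ)
    (hsep : ∀ k, q k < r → δ ≤ |y k|)
    (hstep : Tendsto (fun k => y (k + 1) - y k) atTop (𝓝 0))
    (hyq : Tendsto (fun k => y k ^ 2 * q k) atTop (𝓝 0)) :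
    Tendsto (fun k => y k ^ 2) atTop (𝓝 0) ∨ Tendsto q atTop (𝓝 0) := by
  have hstep' : ∀ᶠ k in atTop, abs (|y (k + 1)| - |y k|) < δ - δ / 2 := by
    filter_upwards [hstep.abs.eventually_lt_const (u := δ / 2) (by simpa using half_pos hδ)]
      with k hk
    linarith [abs_abs_sub_abs_le_abs_sub (y (k + 1)) (y k)]
  have hgap : ∀ᶠ k in atTop, |y k| < δ / 2 ∨ δ ≤ |y k| := by
    filter_upwards [hyq.eventually_lt_const (by positivity : (0 : ℝ) < r * (δ / 2) ^ 2)] with k hk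
    rcases lt_or_ge (q k) r with hqk | hqk
    · exact .inr (hsep k hqk)
    · refine .inl (abs_lt_of_sq_lt_sq ?_ (half_pos hδ).le)
      nlinarith [sq_nonneg (y k)]
  rcases eventually_lt_or_eventually_le_of_abs_sub_lt hstep' hgap with hsmall | hlarge
  · refine .inl (tendsto_zero_of_tendsto_mul_of_le_abs hr ?_ hyq)
    filter_upwards [hsmall] with k hk
    exact (not_lt.1 fun hqk => by linarith [hsep k hqk]).trans (le_abs_self _)
  · refine .inr (tendsto_zero_of_tendsto_mul_of_le_abs (pow_pos hδ 2) ?_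
      (by simpa only [mul_comm] using hyq))
    filter_upwards [hlarge] with k hk
    rw [abs_sq, ← sq_abs (y k)]
    exact pow_le_pow_left₀ hδ.le hk 2

theorem bngd_separation_dichotomy_general
    {d : ℕ}
    (H : Matrix (Fin d) (Fin d) ℝ) (hH : H.PosDef)
    (u : Fin d → ℝ) (hu : u ≠ 0)
    (g : Fin d → ℝ)
    (w : ℕ → Fin d → ℝ) (hwnorm : ∀ k, 1 ≤ Real.sqrt (w k ⬝ᵥ w k))
    (y q : ℕ → ℝ)
    (hy : ∀ k, y k = w k ⬝ᵥ g)
    (hq : ∀ k, q k = u ⬝ᵥ H.mulVec u - (y k) ^ 2 / (w k ⬝ᵥ H.mulVec (w k)))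
    (hstep : Tendsto
      (fun k => Real.sqrt ((w (k + 1) - w k) ⬝ᵥ (w (k + 1) - w k))) atTop (nhds 0))
    (hyq : Tendsto (fun k => (y k) ^ 2 * q k) atTop (nhds 0)) :
    Tendsto (fun k => (y k) ^ 2) atTop (nhds 0) ∨ Tendsto q atTop (nhds 0) := by
  set A := u ⬝ᵥ H *ᵥ u
  have hA : 0 < A := by simpa using hH.dotProduct_mulVec_pos hu
  obtain ⟨c, hc, hcoer⟩ := hH.exists_pos_mul_dotProduct_le
  have hsep : ∀ k, q k < A / 2 → Real.sqrt (c * (A / 2)) ≤ |y k| := by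
    intro k hqk
    have hs : c ≤ w k ⬝ᵥ H *ᵥ w k := by
      nlinarith [hcoer (w k), Real.one_le_sqrt.1 (hwnorm k)]
    have hy2 : y k ^ 2 = (A - q k) * (w k ⬝ᵥ H *ᵥ w k) := by
      rw [hq k, sub_sub_cancel, div_mul_cancel₀ _ (hc.trans_le hs).ne']
    rw [← Real.sqrt_sq_eq_abs]
    exact Real.sqrt_le_sqrt (by rw [hy2]; nlinarith)
  refine tendsto_sq_or_tendsto_zero_of_separated (half_pos hA) (Real.sqrt_pos.2 (by positivity))
    hsep ?_ hyq
  refine squeeze_zero_norm (fun k => ?_)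
    (by simpa only [zero_mul] using hstep.mul_const (Real.sqrt (g ⬝ᵥ g)))
  rw [Real.norm_eq_abs, hy, hy, ← sub_dotProduct]
  exact abs_dotProduct_le _ _

/-- Dichotomy from the separation property: for any sequence `(w_k)` with `‖w_k‖ ≥ 1`,
`y_k := w_kᵀg` and `q_k := uᵀHu − y_k²/(w_kᵀHw_k)`, if `‖w_{k+1} − w_k‖ → 0` and
`y_k²·q_k → 0`, then either `y_k² → 0` or `q_k → 0`. -/
theorem bngd_separation_dichotomy
    {d : ℕ} (hd : 0 < d)
    (H : Matrix (Fin d) (Fin d) ℝ) (hH : H.PosDef)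
    (u : Fin d → ℝ) (hu : u ≠ 0)
    (g : Fin d → ℝ) (hg : g = H.mulVec u)
    (w : ℕ → Fin d → ℝ) (hwnorm : ∀ k, 1 ≤ Real.sqrt (w k ⬝ᵥ w k))
    (y q : ℕ → ℝ)
    (hy : ∀ k, y k = w k ⬝ᵥ g)
    (hq : ∀ k, q k = u ⬝ᵥ H.mulVec u - (y k) ^ 2 / (w k ⬝ᵥ H.mulVec (w k)))
    (hstep : Tendsto
      (fun k => Real.sqrt ((w (k + 1) - w k) ⬝ᵥ (w (k + 1) - w k))) atTop (nhds 0))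
    (hyq : Tendsto (fun k => (y k) ^ 2 * q k) atTop (nhds 0)) :
    Tendsto (fun k => (y k) ^ 2) atTop (nhds 0) ∨ Tendsto q atTop (nhds 0) :=
  bngd_separation_dichotomy_general H hH u hu g w hwnorm y q hy hq hstep hyq
end
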